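/- Let (Γ,μ) be a weighted graph satisfying (p0) and (VD), and suppose there is an F∈W0 for which PMV(F) and PSMV(F) hold. Then E(x,R) ≃ F(x,R) (two-sided comparison with a uniform constant) and the time comparison principle (TC) holds. -/
import Mathlib


open scoped Classical BigOperators

noncomputable section

/-- A weighted graph: a countable infinite connected graph with symmetric
positive edge weights on edges. -/
structure WGraph (Γ : Type*) where
  adj : Γ → Γ → Prop
  adj_symm : ∀ x y, adj x y → adj y x
  w : Γ → Γ → ℝ
  w_symm : ∀ x y, w x y = w y x
  w_pos : ∀ x y, adj x y → 0 < w x y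
  w_zero : ∀ x y, ¬ adj x y → w x y = 0
  connected : ∀ x y, Relation.ReflTransGen adj x y
  inf : Infinite Γ
  cnt : Countable Γ

namespace WGraph

variable {Γ : Type*}

/-- n-fold adjacency: there is a path of length n. -/
def adjN (G : WGraph Γ) : ℕ → Γ → Γ → Prop
  | 0 => fun x y => x = y
  | (n+1) => fun x y => ∃ z, G.adj x z ∧ adjN G n z y

variable (G : WGraph Γ)

/-- μ(x) = Σ_{y} μ_{x,y}. -/
def vtx (x : Γ) : ℝ := ∑' y, G.w x y

/-- μ(A) for a set of vertices. -/
def setVol (A : Set Γ) : ℝ := ∑' y : A, G.vtx y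

/-- graph (shortest path) distance. -/
def dist (x y : Γ) : ℕ := sInf {n | G.adjN n x y}

/-- open metric ball B(x,r). -/
def ball (x : Γ) (r : ℝ) : Set Γ := {y | (G.dist x y : ℝ) < r}

/-- V(x,r) = μ(B(x,r)). -/
def vol (x : Γ) (r : ℝ) : ℝ := G.setVol (G.ball x r)

/-- one-step transition probability P(x,y) = μ_{xy}/μ(x). -/
def kerP (x y : Γ) : ℝ := G.w x y / G.vtx x

/-- n-step transition probability of the walk killed outside A. -/
def killedP (G : WGraph Γ) (A : Set Γ) : ℕ → Γ → Γ → ℝ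
  | 0 => fun x y => if x = y ∧ x ∈ A then 1 else 0
  | (n+1) => fun x y => if x ∈ A then ∑' z, G.kerP x z * killedP G A n z y else 0

/-- P_n(x,y). -/
def transP (n : ℕ) (x y : Γ) : ℝ := G.killedP Set.univ n x y

/-- heat kernel p_n(x,y) = P_n(x,y)/μ(y). -/
def hk (n : ℕ) (x y : Γ) : ℝ := G.transP n x y / G.vtx y

/-- p̃_n = p_n + p_{n+1}. -/
def hkt (n : ℕ) (x y : Γ) : ℝ := G.hk n x y + G.hk (n+1) x y

/-- Dirichlet heat kernel p_n^A. -/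
def hkA (A : Set Γ) (n : ℕ) (x y : Γ) : ℝ := G.killedP A n x y / G.vtx y

/-- p̃_n^A = p_n^A + p_{n+1}^A. -/
def hktA (A : Set Γ) (n : ℕ) (x y : Γ) : ℝ := G.hkA A n x y + G.hkA A (n+1) x y

/-- local Green function G^A(x,y) = Σ_k P_k^A(x,y). -/
def greenF (A : Set Γ) (x y : Γ) : ℝ := ∑' n, G.killedP A n x y

/-- local Green kernel g^A(x,y) = G^A(x,y)/μ(y). -/
def greenK (A : Set Γ) (x y : Γ) : ℝ := G.greenF A x y / G.vtx y

/-- mean exit time E_x(A) = Σ_{y∈A} G^A(x,y). -/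
def exitE (A : Set Γ) (x : Γ) : ℝ := ∑' y : A, G.greenF A x y

/-- E(x,r) = E_x(B(x,r)). -/
def meanE (x : Γ) (r : ℝ) : ℝ := G.exitE (G.ball x r) x

/-- the mean exit time as a function Γ × ℕ → ℝ. -/
def EF : Γ → ℕ → ℝ := fun x R => G.meanE x (R : ℝ)

/-- Ē(x,r) = max_{y ∈ B(x,r)} E_y(B(x,r)). -/
def maxE (x : Γ) (r : ℝ) : ℝ :=
  sSup {e | ∃ y ∈ G.ball x r, e = G.exitE (G.ball x r) y}

/-- Markov operator P. -/
def Pop (u : Γ → ℝ) (x : Γ) : ℝ := ∑' y, G.kerP x y * u y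

/-- Markov operator of the killed walk. -/
def PopB (B : Set Γ) (u : Γ → ℝ) (x : Γ) : ℝ :=
  ∑' y, if y ∈ B then G.kerP x y * u y else 0

/-- Dirichlet Laplacian Δ^B = P^B - I. -/
def lapB (B : Set Γ) (u : Γ → ℝ) (x : Γ) : ℝ := G.PopB B u x - u x

/-- Dirichlet form E(f,f). -/
def dform (f : Γ → ℝ) : ℝ :=
  (1/2) * ∑' p : Γ × Γ, G.w p.1 p.2 * (f p.1 - f p.2)^2

/-- effective resistance between disjoint sets. -/
def res (A B : Set Γ) : ℝ :=
  (sInf {e | ∃ f : Γ → ℝ, (∀ x ∈ A, f x = 1) ∧ (∀ x ∈ B, f x = 0) ∧ e = G.dform f})⁻¹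

/-- ρ(x,r,R), resistance of the annulus. -/
def resA (x : Γ) (r R : ℝ) : ℝ := G.res (G.ball x r) (G.ball x R)ᶜ

/-- v(x,r,R) = V(x,R) - V(x,r). -/
def volA (x : Γ) (r R : ℝ) : ℝ := G.vol x R - G.vol x r

/-- smallest Dirichlet eigenvalue λ(A) of -Δ^A. -/
def lam (A : Set Γ) : ℝ :=
  sInf {e | ∃ f : Γ → ℝ, f ≠ 0 ∧ (∀ x ∉ A, f x = 0) ∧
        e = G.dform f / (∑' x, (f x)^2 * G.vtx x)}

/-- Σ_{y∈A} v(y) μ(y). -/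
def wsum (A : Set Γ) (v : Γ → ℝ) : ℝ := ∑' y : A, v y * G.vtx y

/-- space-time sum Σ_{a ≤ i ≤ b} Σ_{y∈A} u_i(y) μ(y). -/
def stsum (A : Set Γ) (a b : ℝ) (u : ℕ → Γ → ℝ) : ℝ :=
  ∑' i : ℕ, if a ≤ (i:ℝ) ∧ (i:ℝ) ≤ b then G.wsum A (u i) else 0

/-! ### Conditions -/

/-- (p0): controlled weights. -/
def p0cond : Prop := ∃ p > (0:ℝ), ∀ x y, G.adj x y → p ≤ G.kerP x y

/-- (VD): volume doubling. -/
def VD : Prop := ∃ D > (0:ℝ), ∀ (x : Γ) (R : ℝ), 0 < R → G.vol x (2*R) ≤ D * G.vol x R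

/-- u is harmonic on A. -/
def harmOn (u : Γ → ℝ) (A : Set Γ) : Prop := ∀ x ∈ A, G.Pop u x = u x

/-- (H): elliptic Harnack inequality. -/
def EH : Prop := ∃ C > (0:ℝ), ∀ (x : Γ) (R : ℕ), 0 < R →
  ∀ u : Γ → ℝ, (∀ y, 0 ≤ u y) → G.harmOn u (G.ball x (2*(R:ℝ))) →
    ∀ y ∈ G.ball x (R:ℝ), ∀ z ∈ G.ball x (R:ℝ), u y ≤ C * u z

/-- (wTC): weak time comparison principle. -/
def wTC : Prop := ∃ C > (1:ℝ), ∀ (x y : Γ) (R : ℕ), 0 < R → G.dist x y < R →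
  G.meanE x (R:ℝ) ≤ C * G.meanE y (R:ℝ)

/-- (TC): time comparison principle. -/
def TC : Prop := ∃ C > (1:ℝ), ∀ (x y : Γ) (R : ℕ), 0 < R → G.dist x y < R →
  G.meanE x (2*(R:ℝ)) ≤ C * G.meanE y (R:ℝ)

/-- (ER): the Einstein relation E(x,2R) ≃ ρ(x,R,2R)v(x,R,2R). -/
def ER : Prop := ∃ C > (1:ℝ), ∀ (x : Γ) (R : ℕ), 0 < R →
  G.meanE x (2*(R:ℝ)) ≤ C * (G.resA x (R:ℝ) (2*(R:ℝ)) * G.volA x (R:ℝ) (2*(R:ℝ))) ∧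
  G.resA x (R:ℝ) (2*(R:ℝ)) * G.volA x (R:ℝ) (2*(R:ℝ)) ≤ C * G.meanE x (2*(R:ℝ))

/-- (aDρv): anti-doubling for the resistance-volume product. -/
def aDrv : Prop := ∃ c > (0:ℝ), ∃ b > (0:ℝ), ∀ (x : Γ) (r R : ℕ), 0 < r → r < R →
  c * ((R:ℝ)/(r:ℝ)) ^ b * (G.resA x (r:ℝ) (2*(r:ℝ)) * G.volA x (r:ℝ) (2*(r:ℝ)))
    ≤ G.resA x (R:ℝ) (2*(R:ℝ)) * G.volA x (R:ℝ) (2*(R:ℝ))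

/-- RLE(E): resistance lower estimate w.r.t. the mean exit time. -/
def RLE_E : Prop := ∃ c > (0:ℝ), ∀ (x : Γ) (R : ℕ), 0 < R →
  c * G.meanE x (2*(R:ℝ)) / G.vol x (2*(R:ℝ)) ≤ G.resA x (R:ℝ) (2*(R:ℝ))

/-- the two-sided regularity (w1) of a space-time scaling function,
with exponents β (upper) and β' (lower). -/
def W0reg (F : Γ → ℕ → ℝ) (β β' : ℝ) : Prop :=
  ∃ cF > (0:ℝ), ∃ CF > (0:ℝ), ∀ (x y : Γ) (R r : ℕ), 0 < r → r < R → G.dist x y < R →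
    cF * ((R:ℝ)/(r:ℝ)) ^ β' ≤ F x R / F y r ∧ F x R / F y r ≤ CF * ((R:ℝ)/(r:ℝ)) ^ β

/-- F ∈ W₀. -/
def memW0 (F : Γ → ℕ → ℝ) : Prop :=
  (∃ β > (1:ℝ), ∃ β' > (0:ℝ), G.W0reg F β β') ∧
  (∃ c > (0:ℝ), ∀ (x : Γ) (R : ℕ), c * (R:ℝ)^2 ≤ F x R) ∧
  (∀ (x : Γ) (R : ℕ), F x R + 1 ≤ F x (R+1))

/-- F ∈ W₁ (β' > 1). -/
def memW1 (F : Γ → ℕ → ℝ) : Prop :=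
  (∃ β > (1:ℝ), ∃ β' > (1:ℝ), G.W0reg F β β') ∧
  (∃ c > (0:ℝ), ∀ (x : Γ) (R : ℕ), c * (R:ℝ)^2 ≤ F x R) ∧
  (∀ (x : Γ) (R : ℕ), F x R + 1 ≤ F x (R+1))

/-- generalized inverse f(x,n) = min{R ∈ ℕ : F(x,R) ≥ n}. -/
def invF' (F : Γ → ℕ → ℝ) (x : Γ) (n : ℕ) : ℕ := sInf {R : ℕ | (n:ℝ) ≤ F x R}

/-- g(F): two-sided bound for the Green kernel on annuli. -/
def gF (F : Γ → ℕ → ℝ) : Prop :=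
  ∃ c > (0:ℝ), ∃ C > (0:ℝ), ∀ (x : Γ) (R : ℕ), 0 < R → ∀ y : Γ,
    y ∈ G.ball x (R:ℝ) → y ∉ G.ball x ((R:ℝ)/2) →
      G.greenK (G.ball x (2*(R:ℝ))) x y ≤ C * F x (2*R) / G.vol x (2*(R:ℝ)) ∧
      c * F x (2*R) / G.vol x (2*(R:ℝ)) ≤ G.greenK (G.ball x (2*(R:ℝ))) x y

/-- DUE(F): diagonal upper estimate. -/
def DUE (F : Γ → ℕ → ℝ) : Prop :=
  ∃ C > (0:ℝ), ∀ (x : Γ) (n : ℕ), 0 < n → G.hk n x x ≤ C / G.vol x (invF' F x n : ℝ)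

/-- UE(F): (sub-Gaussian) heat kernel upper estimate. -/
def UE (F : Γ → ℕ → ℝ) : Prop :=
  ∃ C > (1:ℝ), ∃ β > (1:ℝ), ∃ c > (0:ℝ), ∀ (x y : Γ) (n : ℕ), 0 < n →
    G.hk n x y ≤ C / G.vol x (invF' F x n : ℝ) *
      Real.exp (-(c * (F x (G.dist x y) / n) ^ (1/(β-1))))

/-- PLE(F): particular lower estimate for the Dirichlet heat kernel. -/
def PLE (F : Γ → ℕ → ℝ) : Prop :=
  ∃ c δ ε : ℝ, 0 < c ∧ c < 1 ∧ 0 < δ ∧ δ < 1 ∧ 0 < ε ∧ ε < 1 ∧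
    ∀ (x : Γ) (R : ℕ), 0 < R → ∀ (n : ℕ) (y : Γ),
      (n:ℝ) ≤ ε * F x R →
      (G.dist x y : ℝ) < min (n:ℝ) (δ * (invF' F x n : ℝ)) →
        c / G.vol x (invF' F x n : ℝ) ≤ G.hktA (G.ball x (R:ℝ)) n x y

/-- NDLE(F): near diagonal lower estimate. -/
def NDLE (F : Γ → ℕ → ℝ) : Prop :=
  ∃ c > (0:ℝ), ∃ δ > (0:ℝ), ∀ (x y : Γ) (n : ℕ), 0 < n →
    (G.dist x y : ℝ) < min (δ * (invF' F x n : ℝ)) (n:ℝ) →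
      c / G.vol x (invF' F x n : ℝ) ≤ G.hkt n x y

/-- LE(F): off-diagonal lower estimate. -/
def LE (F : Γ → ℕ → ℝ) : Prop :=
  ∃ C > (1:ℝ), ∃ β' > (1:ℝ), ∃ c > (0:ℝ), ∀ (x y : Γ) (n : ℕ), G.dist x y ≤ n →
    c / G.vol x (invF' F x n : ℝ) *
        Real.exp (-(C * (F x (G.dist x y) / n) ^ (1/(β'-1))))
      ≤ G.hkt n x y

/-- u is a nonnegative Dirichlet sub-solution of the heat equation
on [0,T] × B. -/
def subSolOn (B : Set Γ) (T : ℝ) (u : ℕ → Γ → ℝ) : Prop :=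
  (∀ n y, 0 ≤ u n y) ∧
  ∀ (n : ℕ) (y : Γ), y ∈ B → (n:ℝ) < T → u (n+1) y - u n y ≤ G.lapB B (u n) y

/-- u is a nonnegative Dirichlet super-solution of the heat equation
on [0,T] × B. -/
def supSolOn (B : Set Γ) (T : ℝ) (u : ℕ → Γ → ℝ) : Prop :=
  (∀ n y, 0 ≤ u n y) ∧
  ∀ (n : ℕ) (y : Γ), y ∈ B → (n:ℝ) < T → G.lapB B (u n) y ≤ u (n+1) y - u n y

/-- PMV_δ(F) with constants c1 < c2 < c3 < c4 ≤ c5: parabolic mean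
value inequality. -/
def PMVd (F : Γ → ℕ → ℝ) (δ c1 c2 c3 c4 c5 : ℝ) : Prop :=
  ∃ C > (1:ℝ), ∀ (x : Γ) (R : ℕ), 0 < R →
    ∀ u : ℕ → Γ → ℝ, G.subSolOn (G.ball x (R:ℝ)) (c5 * F x R) u →
      ∀ (n : ℕ) (y : Γ), y ∈ G.ball x (δ * R) →
        c3 * F x R ≤ (n:ℝ) → (n:ℝ) ≤ c4 * F x R →
          u n y ≤ C / ((c2 - c1) * F x R * G.vol x (δ * R)) *
            G.stsum (G.ball x (δ * R)) (c1 * F x R) (c2 * F x R) u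

/-- PMV(F) = PMV_1(F) for all admissible constants. -/
def PMV (F : Γ → ℕ → ℝ) : Prop :=
  ∀ c1 c2 c3 c4 c5 : ℝ, 0 ≤ c1 → c1 < c2 → c2 < c3 → c3 < c4 → c4 ≤ c5 →
    G.PMVd F 1 c1 c2 c3 c4 c5

/-- PSMV(F): parabolic super mean value inequality. -/
def PSMV (F : Γ → ℕ → ℝ) : Prop :=
  ∃ ε : ℝ, 0 < ε ∧ ε < 1 ∧
    ∀ c1 c2 c3 c4 c5 : ℝ, 0 < c1 → c1 < c2 → c2 < c3 → c3 < c4 → c4 ≤ c5 →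
      c4 - c1 < ε →
      ∃ δ > (0:ℝ), ∃ c > (0:ℝ), ∀ (x : Γ) (R : ℕ), 0 < R →
        ∀ u : ℕ → Γ → ℝ, G.supSolOn (G.ball x (R:ℝ)) (c5 * F x R) u →
          ∀ (k : ℕ) (y : Γ), y ∈ G.ball x (δ * R) →
            c3 * F x R ≤ (k:ℝ) → (k:ℝ) ≤ c4 * F x R →
              c / ((c2 - c1) * F x R * G.vol x (δ * R)) *
                  G.stsum (G.ball x (δ * R)) (c1 * F x R) (c2 * F x R)
                    (fun i z => u i z + u (i+1) z)
                ≤ u k y + u (k+1) y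

/-- u solves the heat equation ∂ₙu = Δu on [a,b) × B. -/
def solOn (B : Set Γ) (a b : ℝ) (u : ℕ → Γ → ℝ) : Prop :=
  (∀ n y, 0 ≤ u n y) ∧
  ∀ (n : ℕ) (y : Γ), y ∈ B → a ≤ (n:ℝ) → (n:ℝ) < b → u (n+1) y = G.Pop (u n) y

/-- PH(F): parabolic Harnack inequality. -/
def PH (F : Γ → ℕ → ℝ) : Prop :=
  ∃ C > (0:ℝ), ∀ (x : Γ) (R k : ℕ), 0 < R →
    ∀ u : ℕ → Γ → ℝ, G.solOn (G.ball x (2*(R:ℝ))) (k:ℝ) ((k:ℝ) + F x R) u →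
      ∀ (nm np : ℕ) (xm xp : Γ), xm ∈ G.ball x (R:ℝ) → xp ∈ G.ball x (R:ℝ) →
        (k:ℝ) + F x R / 4 ≤ (nm:ℝ) → (nm:ℝ) ≤ (k:ℝ) + F x R / 2 →
        (k:ℝ) + 3 * F x R / 4 ≤ (np:ℝ) → (np:ℝ) < (k:ℝ) + F x R →
        (G.dist xm xp : ℝ) ≤ (np:ℝ) - (nm:ℝ) →
          u nm xm ≤ C * (u np xp + u (np+1) xp)

/-- (MV): elliptic mean value inequality. -/
def MV : Prop := ∃ C > (0:ℝ), ∀ (x : Γ) (R : ℕ), 0 < R →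
  ∀ u : Γ → ℝ, (∀ y, 0 ≤ u y) → G.harmOn u (G.ball x (R:ℝ)) →
    u x ≤ C / G.vol x (R:ℝ) * G.wsum (G.ball x (R:ℝ)) u

/-- the set of integers k eligible in the definition of the local
sub-Gaussian upper exponent k_x(n,R). -/
def kSet (F : Γ → ℕ → ℝ) (q : ℝ) (x : Γ) (n R : ℕ) : Set ℕ :=
  {k | 1 ≤ k ∧ ∀ y : Γ, G.dist x y < R → (n:ℝ)/(k:ℝ) ≤ q * F y (R / k)}

/-- k = k_x(n,R): the maximal eligible integer, or 1 if there is none. -/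
def isKexp (F : Γ → ℕ → ℝ) (q : ℝ) (x : Γ) (n R k : ℕ) : Prop :=
  (k ∈ G.kSet F q x n R ∧ ∀ j ∈ G.kSet F q x n R, j ≤ k) ∨
  (G.kSet F q x n R = ∅ ∧ k = 1)

/-- the set of integers l eligible in the definition of l_x(n,R). -/
def lSet' (F : Γ → ℕ → ℝ) (Cl : ℝ) (x : Γ) (n R : ℕ) : Set ℕ :=
  {l | 1 ≤ l ∧ l ≤ n ∧ Cl * F x ((R + l - 1) / l) ≤ (n:ℝ)/(l:ℝ)}

/-- l = l_x(n,R): the minimal eligible integer, or n if there is none. -/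
def isLexp (F : Γ → ℕ → ℝ) (Cl : ℝ) (x : Γ) (n R l : ℕ) : Prop :=
  (l ∈ lSet' F Cl x n R ∧ ∀ j ∈ lSet' F Cl x n R, l ≤ j) ∨
  (lSet' F Cl x n R = ∅ ∧ l = n)

/-! ### Auxiliary development for Statement 11 -/

section Aux11

variable {Γ : Type*} (G : WGraph Γ) {p : ℝ}

lemma w_nonneg' (x y : Γ) : 0 ≤ G.w x y := by
  by_cases h : G.adj x y
  · exact (G.w_pos x y h).le
  · exact le_of_eq (G.w_zero x y h).symm

lemma exists_adj' (x : Γ) : ∃ y, G.adj x y := by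
  haveI := G.inf
  obtain ⟨y, hy⟩ := exists_ne x
  have h := G.connected x y
  rcases (Relation.ReflTransGen.cases_head h) with h1 | ⟨c, hc, _⟩
  · exact absurd h1.symm hy
  · exact ⟨c, hc⟩

lemma summable_w (hp : 0 < p) (hker : ∀ x y, G.adj x y → p ≤ G.kerP x y) (x : Γ) :
    Summable (G.w x) := by
  by_contra h
  have hv : G.vtx x = 0 := tsum_eq_zero_of_not_summable h
  obtain ⟨y, hy⟩ := G.exists_adj' x
  have h2 := hker x y hy
  rw [WGraph.kerP, hv, div_zero] at h2
  linarith

lemma vtx_pos (hp : 0 < p) (hker : ∀ x y, G.adj x y → p ≤ G.kerP x y) (x : Γ) :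
    0 < G.vtx x := by
  obtain ⟨y, hy⟩ := G.exists_adj' x
  have h1 : G.w x y ≤ G.vtx x :=
    Summable.le_tsum (G.summable_w hp hker x) y (fun z _ => G.w_nonneg' x z)
  linarith [G.w_pos x y hy]

lemma kerP_nonneg (hp : 0 < p) (hker : ∀ x y, G.adj x y → p ≤ G.kerP x y) (x y : Γ) :
    0 ≤ G.kerP x y :=
  div_nonneg (G.w_nonneg' x y) (G.vtx_pos hp hker x).le

lemma summable_kerP (hp : 0 < p) (hker : ∀ x y, G.adj x y → p ≤ G.kerP x y) (x : Γ) :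
    Summable (G.kerP x) :=
  (G.summable_w hp hker x).div_const _

lemma tsum_kerP (hp : 0 < p) (hker : ∀ x y, G.adj x y → p ≤ G.kerP x y) (x : Γ) :
    ∑' y, G.kerP x y = 1 := by
  simp only [WGraph.kerP]
  rw [tsum_div_const]
  exact div_self (G.vtx_pos hp hker x).ne'

lemma sum_kerP_le (hp : 0 < p) (hker : ∀ x y, G.adj x y → p ≤ G.kerP x y) (x : Γ)
    (s : Finset Γ) : ∑ y ∈ s, G.kerP x y ≤ 1 := by
  have := Summable.sum_le_tsum s (fun y _ => G.kerP_nonneg hp hker x y) (G.summable_kerP hp hker x)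
  rw [G.tsum_kerP hp hker x] at this
  exact this

lemma kerP_le_one (hp : 0 < p) (hker : ∀ x y, G.adj x y → p ≤ G.kerP x y) (x y : Γ) :
    G.kerP x y ≤ 1 := by
  have := G.sum_kerP_le hp hker x {y}
  simpa using this

lemma p_le_one (hp : 0 < p) (hker : ∀ x y, G.adj x y → p ≤ G.kerP x y) : p ≤ 1 := by
  haveI := G.inf
  obtain ⟨x⟩ : Nonempty Γ := inferInstance
  obtain ⟨y, hy⟩ := G.exists_adj' x
  exact le_trans (hker _ _ hy) (G.kerP_le_one hp hker _ _)

lemma finite_adj (hp : 0 < p) (hker : ∀ x y, G.adj x y → p ≤ G.kerP x y) (x : Γ) :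
    {y | G.adj x y}.Finite := by
  by_contra h
  have hinf : {y | G.adj x y}.Infinite := h
  obtain ⟨t, hts, htc⟩ := hinf.exists_subset_card_eq (⌈1/p⌉₊ + 1)
  have h1 : (t.card : ℝ) * p ≤ ∑ y ∈ t, G.kerP x y := by
    have := Finset.card_nsmul_le_sum t (G.kerP x) p (fun y hy => hker x y (hts hy))
    simpa [nsmul_eq_mul] using this
  have h3 : (1/p : ℝ) ≤ ⌈1/p⌉₊ := Nat.le_ceil _
  have h4 : (t.card : ℝ) = (⌈1/p⌉₊ : ℝ) + 1 := by rw [htc]; push_cast; ring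
  have h5 : (1:ℝ) < (t.card : ℝ) * p := by
    rw [h4]
    have he : (1/p) * p = 1 := by field_simp
    nlinarith
  linarith [G.sum_kerP_le hp hker x t]

/-! #### distance lemmas -/

lemma adjN_comp {m n : ℕ} {x y z : Γ} (h1 : G.adjN m x y) (h2 : G.adjN n y z) :
    G.adjN (m + n) x z := by
  induction m generalizing x with
  | zero => rw [show G.adjN 0 x y = (x = y) from rfl] at h1; subst h1; simpa using h2
  | succ k ih =>
      obtain ⟨u, hxu, hu⟩ := h1
      exact (show k + 1 + n = (k + n) + 1 by omega) ▸ ⟨u, hxu, ih hu⟩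

lemma adjN_snoc {n : ℕ} {x y z : Γ} (h1 : G.adjN n x y) (h2 : G.adj y z) :
    G.adjN (n + 1) x z := by
  induction n generalizing x with
  | zero => rw [show G.adjN 0 x y = (x = y) from rfl] at h1; subst h1; exact ⟨z, h2, rfl⟩
  | succ k ih =>
      obtain ⟨u, hxu, hu⟩ := h1
      exact ⟨u, hxu, ih hu⟩

lemma adjN_symm' {n : ℕ} {x y : Γ} (h : G.adjN n x y) : G.adjN n y x := by
  induction n generalizing x with
  | zero => rw [show G.adjN 0 x y = (x = y) from rfl] at h; subst h; rfl
  | succ k ih =>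
      obtain ⟨u, hxu, hu⟩ := h
      exact G.adjN_snoc (ih hu) (G.adj_symm x u hxu)

lemma exists_adjN (x y : Γ) : ∃ n, G.adjN n x y := by
  have h := G.connected x y
  induction h with
  | refl => exact ⟨0, rfl⟩
  | tail _ h2 ih => obtain ⟨n, hn⟩ := ih; exact ⟨n + 1, G.adjN_snoc hn h2⟩

lemma dist_spec (x y : Γ) : G.adjN (G.dist x y) x y :=
  Nat.sInf_mem (G.exists_adjN x y)

lemma dist_le' {n : ℕ} {x y : Γ} (h : G.adjN n x y) : G.dist x y ≤ n :=
  Nat.sInf_le h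

lemma dist_self' (x : Γ) : G.dist x x = 0 :=
  Nat.le_zero.mp (G.dist_le' rfl)

lemma dist_comm' (x y : Γ) : G.dist x y = G.dist y x :=
  le_antisymm (G.dist_le' (G.adjN_symm' (G.dist_spec y x)))
    (G.dist_le' (G.adjN_symm' (G.dist_spec x y)))

lemma dist_triangle' (x y z : Γ) : G.dist x z ≤ G.dist x y + G.dist y z :=
  G.dist_le' (G.adjN_comp (G.dist_spec x y) (G.dist_spec y z))

lemma dist_eq_zero_iff' {x y : Γ} : G.dist x y = 0 ↔ x = y := by
  constructor
  · intro h
    have := G.dist_spec x y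
    rw [h] at this
    exact this
  · rintro rfl; exact G.dist_self' x

lemma adjN_split {k l : ℕ} {x y : Γ} (h : G.adjN (k + l) x y) :
    ∃ u, G.adjN k x u ∧ G.adjN l u y := by
  induction k generalizing x with
  | zero => exact ⟨x, rfl, by simpa using h⟩
  | succ m ih =>
      rw [show m + 1 + l = (m + l) + 1 by omega] at h
      obtain ⟨z, hz, h'⟩ := h
      obtain ⟨u, h1, h2⟩ := ih h'
      exact ⟨u, ⟨z, hz, h1⟩, h2⟩

/-! #### ball lemmas -/

lemma mem_ball_nat {x y : Γ} {r : ℕ} : y ∈ G.ball x (r:ℝ) ↔ G.dist x y < r := by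
  simp only [WGraph.ball, Set.mem_setOf_eq, Nat.cast_lt]

lemma mem_ball_self' {x : Γ} {r : ℝ} (hr : 0 < r) : x ∈ G.ball x r := by
  simp only [WGraph.ball, Set.mem_setOf_eq, G.dist_self' x, Nat.cast_zero]
  exact hr

lemma ball_mono {x : Γ} {r r' : ℝ} (h : r ≤ r') : G.ball x r ⊆ G.ball x r' :=
  fun y hy => lt_of_lt_of_le hy h

lemma ball_finite (hp : 0 < p) (hker : ∀ x y, G.adj x y → p ≤ G.kerP x y) (x : Γ) (r : ℝ) :
    (G.ball x r).Finite := by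
  have key : ∀ n : ℕ, {y | G.dist x y < n}.Finite := by
    intro n
    induction n with
    | zero => simp
    | succ m ih =>
        have hsub : {y | G.dist x y < m + 1} ⊆
            insert x ({y | G.dist x y < m} ∪ ⋃ u ∈ {y | G.dist x y < m}, {z | G.adj u z}) := by
          intro y hy
          have hy' : G.dist x y ≤ m := Nat.lt_succ_iff.mp hy
          rcases Nat.eq_zero_or_pos (G.dist x y) with h0 | hpos
          · left; exact (G.dist_eq_zero_iff'.mp h0).symm
          · right
            rcases lt_or_ge (G.dist x y) m with hlt | hge
            · left; exact hlt
            · have hdm : G.dist x y = m := le_antisymm hy' hge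
              obtain ⟨k, hk⟩ := Nat.exists_eq_succ_of_ne_zero (Nat.pos_iff_ne_zero.mp hpos)
              have hspec := G.dist_spec x y
              rw [hdm] at hspec
              have hkm : m = k + 1 := by omega
              rw [hkm] at hspec
              obtain ⟨u, h1, h2⟩ := G.adjN_split hspec
              obtain ⟨z, hz, hz0⟩ := h2
              rw [show G.adjN 0 z y = (z = y) from rfl] at hz0
              subst hz0
              right
              refine Set.mem_biUnion (show G.dist x u < m from ?_) hz
              calc G.dist x u ≤ k := G.dist_le' h1
                _ < m := by omega
        exact Set.Finite.subset (Set.Finite.insert x ((ih.union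
          (Set.Finite.biUnion ih (fun u _ => G.finite_adj hp hker u))))) hsub
  have hsub2 : G.ball x r ⊆ {y | G.dist x y < ⌈max r 0⌉₊ + 1} := by
    intro y hy
    have h1 : (G.dist x y : ℝ) < r := hy
    have h2 : (G.dist x y : ℝ) ≤ ⌈max r 0⌉₊ := le_trans (le_trans h1.le (le_max_left r 0)) (Nat.le_ceil _)
    have : G.dist x y ≤ ⌈max r 0⌉₊ := by exact_mod_cast h2
    simpa [Set.mem_setOf_eq] using Nat.lt_succ_of_le this
  exact Set.Finite.subset (key _) hsub2

lemma exists_dist_eq (hp : 0 < p) (hker : ∀ x y, G.adj x y → p ≤ G.kerP x y) (x : Γ) (n : ℕ) :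
    ∃ v, G.dist x v = n := by
  haveI := G.inf
  obtain ⟨v, hv⟩ := (Set.Finite.infinite_compl
    (G.ball_finite hp hker x ((n:ℝ) + 1))).nonempty
  have hd : n + 1 ≤ G.dist x v := by
    by_contra hcon
    apply hv
    show (G.dist x v : ℝ) < (n:ℝ) + 1
    have h' : G.dist x v < n + 1 := by omega
    exact_mod_cast h' 
  set m := G.dist x v with hm
  have hsplit : G.adjN (n + (m - n)) x v := by
    rw [show n + (m - n) = m by omega]
    exact G.dist_spec x v
  obtain ⟨u, h1, h2⟩ := G.adjN_split hsplit
  refine ⟨u, le_antisymm (G.dist_le' h1) ?_⟩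
  have h3 : m ≤ G.dist x u + (m - n) :=
    le_trans (G.dist_triangle' x u v) (by gcongr; exact G.dist_le' h2)
  omega

/-! #### volume lemmas -/

lemma setVol_eq_sum {A : Set Γ} (hA : A.Finite) :
    G.setVol A = ∑ y ∈ hA.toFinset, G.vtx y := by
  rw [WGraph.setVol, tsum_subtype]
  rw [tsum_eq_sum (s := hA.toFinset) (fun y hy => Set.indicator_of_notMem (by
    simpa [Set.Finite.mem_toFinset] using hy) _)]
  exact Finset.sum_congr rfl (fun y hy => Set.indicator_of_mem (by
    simpa [Set.Finite.mem_toFinset] using hy) _)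

lemma vtx_nonneg (x : Γ) : 0 ≤ G.vtx x :=
  tsum_nonneg (fun y => G.w_nonneg' x y)

lemma setVol_mono {A B : Set Γ} (hA : A.Finite) (hB : B.Finite) (h : A ⊆ B) :
    G.setVol A ≤ G.setVol B := by
  rw [G.setVol_eq_sum hA, G.setVol_eq_sum hB]
  refine Finset.sum_le_sum_of_subset_of_nonneg ?_ (fun y _ _ => G.vtx_nonneg y)
  intro y hy
  simp only [Set.Finite.mem_toFinset] at hy ⊢
  exact h hy

lemma le_setVol {A : Set Γ} (hA : A.Finite) {x : Γ} (hx : x ∈ A) :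
    G.vtx x ≤ G.setVol A := by
  rw [G.setVol_eq_sum hA]
  exact Finset.single_le_sum (fun y _ => G.vtx_nonneg y) (by simpa [Set.Finite.mem_toFinset])

lemma setVol_pos (hp : 0 < p) (hker : ∀ x y, G.adj x y → p ≤ G.kerP x y)
    {A : Set Γ} (hA : A.Finite) {x : Γ} (hx : x ∈ A) : 0 < G.setVol A :=
  lt_of_lt_of_le (G.vtx_pos hp hker x) (G.le_setVol hA hx)

lemma setVol_union_le {A B C : Set Γ} (hA : A.Finite) (hB : B.Finite) (hC : C.Finite)
    (hd : Disjoint A B) (hAC : A ⊆ C) (hBC : B ⊆ C) :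
    G.setVol A + G.setVol B ≤ G.setVol C := by
  rw [G.setVol_eq_sum hA, G.setVol_eq_sum hB, G.setVol_eq_sum hC]
  rw [← Finset.sum_union (by
    rw [Finset.disjoint_left]
    intro a ha hb
    simp only [Set.Finite.mem_toFinset] at ha hb
    exact Set.disjoint_left.mp hd ha hb)]
  refine Finset.sum_le_sum_of_subset_of_nonneg ?_ (fun y _ _ => G.vtx_nonneg y)
  intro y hy
  simp only [Finset.mem_union, Set.Finite.mem_toFinset] at hy ⊢
  rcases hy with h | h
  · exact hAC h
  · exact hBC h

/-! #### killed kernel lemmas -/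

lemma killedP_zero_def {A : Set Γ} (x y : Γ) :
    G.killedP A 0 x y = if x = y ∧ x ∈ A then 1 else 0 := rfl

lemma killedP_succ_def {A : Set Γ} (n : ℕ) (x y : Γ) :
    G.killedP A (n+1) x y =
      if x ∈ A then ∑' z, G.kerP x z * G.killedP A n z y else 0 := rfl

lemma killedP_nonneg (hp : 0 < p) (hker : ∀ x y, G.adj x y → p ≤ G.kerP x y)
    {A : Set Γ} (n : ℕ) (x y : Γ) : 0 ≤ G.killedP A n x y := by
  induction n generalizing x with
  | zero => rw [G.killedP_zero_def]; positivity
  | succ m ih =>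
      rw [G.killedP_succ_def]
      split
      · exact tsum_nonneg (fun z => mul_nonneg (G.kerP_nonneg hp hker x z) (ih z))
      · exact le_refl 0

lemma killedP_support {A : Set Γ} {n : ℕ} {x y : Γ} (h : G.killedP A n x y ≠ 0) :
    x ∈ A ∧ y ∈ A := by
  induction n generalizing x with
  | zero =>
      rw [G.killedP_zero_def] at h
      by_cases hc : x = y ∧ x ∈ A
      · exact ⟨hc.2, hc.1 ▸ hc.2⟩
      · simp [hc] at h
  | succ m ih =>
      rw [G.killedP_succ_def] at h
      by_cases hx : x ∈ A
      · rw [if_pos hx] at h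
        refine ⟨hx, ?_⟩
        by_contra hy
        apply h
        have hz : ∀ z, G.kerP x z * G.killedP A m z y = 0 := by
          intro z
          by_cases hk : G.killedP A m z y = 0
          · rw [hk, mul_zero]
          · exact absurd (ih hk).2 hy
        simp [hz]
      · rw [if_neg hx] at h; exact absurd rfl h

lemma killedP_of_notMem {A : Set Γ} {x : Γ} (hx : x ∉ A) (n : ℕ) (y : Γ) :
    G.killedP A n x y = 0 := by
  by_contra h
  exact hx (G.killedP_support h).1

lemma killedP_succ_sum {A : Set Γ} (hA : A.Finite) {x : Γ} (hx : x ∈ A) (n : ℕ) (y : Γ) :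
    G.killedP A (n+1) x y = ∑ z ∈ hA.toFinset, G.kerP x z * G.killedP A n z y := by
  rw [G.killedP_succ_def, if_pos hx]
  refine tsum_eq_sum (fun z hz => ?_)
  rw [G.killedP_of_notMem (fun hzA => hz (hA.mem_toFinset.mpr hzA)) n y, mul_zero]

/-! #### survival probability -/

end Aux11

/-- survival probability of the killed walk -/
def surv (G : WGraph Γ) (A : Set Γ) (n : ℕ) (x : Γ) : ℝ := ∑' y, G.killedP A n x y

section Aux11b

variable {Γ : Type*} (G : WGraph Γ) {p : ℝ}

lemma surv_eq_sum {A : Set Γ} (hA : A.Finite) (n : ℕ) (x : Γ) :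
    G.surv A n x = ∑ y ∈ hA.toFinset, G.killedP A n x y := by
  refine tsum_eq_sum (fun y hy => ?_)
  by_contra h
  exact hy (hA.mem_toFinset.mpr (G.killedP_support h).2)

lemma surv_nonneg (hp : 0 < p) (hker : ∀ x y, G.adj x y → p ≤ G.kerP x y)
    {A : Set Γ} (n : ℕ) (x : Γ) : 0 ≤ G.surv A n x :=
  tsum_nonneg (fun y => G.killedP_nonneg hp hker n x y)

lemma surv_of_notMem {A : Set Γ} {x : Γ} (hx : x ∉ A) (n : ℕ) :
    G.surv A n x = 0 := by
  have : ∀ y, G.killedP A n x y = 0 := G.killedP_of_notMem hx n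
  simp [WGraph.surv, this]

lemma surv_zero_eq_one {A : Set Γ} {x : Γ} (hx : x ∈ A) : G.surv A 0 x = 1 := by
  rw [WGraph.surv]
  rw [tsum_eq_single x (fun y hy => by
    rw [G.killedP_zero_def, if_neg]
    rintro ⟨h1, -⟩
    exact hy h1.symm)]
  rw [G.killedP_zero_def, if_pos ⟨rfl, hx⟩]

lemma surv_succ (hA : (A : Set Γ).Finite) {x : Γ} (hx : x ∈ A) (n : ℕ) :
    G.surv A (n+1) x = ∑ z ∈ hA.toFinset, G.kerP x z * G.surv A n z := by
  rw [G.surv_eq_sum hA]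
  have h1 : ∀ y ∈ hA.toFinset, G.killedP A (n+1) x y
      = ∑ z ∈ hA.toFinset, G.kerP x z * G.killedP A n z y :=
    fun y _ => G.killedP_succ_sum hA hx n y
  rw [Finset.sum_congr rfl h1, Finset.sum_comm]
  refine Finset.sum_congr rfl (fun z _ => ?_)
  rw [G.surv_eq_sum hA, Finset.mul_sum]

lemma surv_le_one (hp : 0 < p) (hker : ∀ x y, G.adj x y → p ≤ G.kerP x y)
    {A : Set Γ} (hA : A.Finite) (n : ℕ) (x : Γ) : G.surv A n x ≤ 1 := by
  induction n generalizing x with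
  | zero =>
      by_cases hx : x ∈ A
      · rw [G.surv_zero_eq_one hx]
      · rw [G.surv_of_notMem hx]; norm_num
  | succ m ih =>
      by_cases hx : x ∈ A
      · rw [G.surv_succ hA hx]
        calc ∑ z ∈ hA.toFinset, G.kerP x z * G.surv A m z
            ≤ ∑ z ∈ hA.toFinset, G.kerP x z := by
              refine Finset.sum_le_sum (fun z _ => ?_)
              have := G.kerP_nonneg hp hker x z
              nlinarith [ih z, G.surv_nonneg hp hker (A := A) m z]
          _ ≤ 1 := G.sum_kerP_le hp hker x _
      · rw [G.surv_of_notMem hx]; norm_num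

lemma surv_succ_le (hp : 0 < p) (hker : ∀ x y, G.adj x y → p ≤ G.kerP x y)
    {A : Set Γ} (hA : A.Finite) (n : ℕ) (x : Γ) :
    G.surv A (n+1) x ≤ G.surv A n x := by
  induction n generalizing x with
  | zero =>
      by_cases hx : x ∈ A
      · rw [G.surv_zero_eq_one hx]
        exact G.surv_le_one hp hker hA 1 x
      · rw [G.surv_of_notMem hx, G.surv_of_notMem hx]
  | succ m ih =>
      by_cases hx : x ∈ A
      · rw [G.surv_succ hA hx, G.surv_succ hA hx]
        refine Finset.sum_le_sum (fun z _ => ?_)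
        exact mul_le_mul_of_nonneg_left (ih z) (G.kerP_nonneg hp hker x z)
      · rw [G.surv_of_notMem hx, G.surv_of_notMem hx]

lemma surv_mono (hp : 0 < p) (hker : ∀ x y, G.adj x y → p ≤ G.kerP x y)
    {A : Set Γ} (hA : A.Finite) {m n : ℕ} (h : m ≤ n) (x : Γ) :
    G.surv A n x ≤ G.surv A m x := by
  induction n with
  | zero => rw [Nat.le_zero.mp h]
  | succ k ih =>
      rcases Nat.lt_or_ge m (k+1) with h' | h'
      · exact le_trans (G.surv_succ_le hp hker hA k x) (ih (by omega))
      · rw [le_antisymm h h']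

lemma killedP_add {A : Set Γ} (hA : A.Finite) (m n : ℕ) (x y : Γ) :
    G.killedP A (m + n) x y
      = ∑ w ∈ hA.toFinset, G.killedP A m x w * G.killedP A n w y := by
  induction m generalizing x with
  | zero =>
      by_cases hx : x ∈ A
      · rw [zero_add]
        have h1 : ∀ w ∈ hA.toFinset, G.killedP A 0 x w * G.killedP A n w y
            = if x = w then G.killedP A n w y else 0 := by
          intro w _
          rw [G.killedP_zero_def]
          by_cases hw : x = w
          · subst hw; simp [hx]
          · simp [hw]
        rw [Finset.sum_congr rfl h1, Finset.sum_ite_eq, if_pos (hA.mem_toFinset.mpr hx)]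
      · rw [G.killedP_of_notMem hx]
        have h1 : ∀ w ∈ hA.toFinset, G.killedP A 0 x w * G.killedP A n w y = 0 := by
          intro w _
          rw [G.killedP_of_notMem hx, zero_mul]
        rw [Finset.sum_congr rfl h1, Finset.sum_const, smul_zero]
  | succ k ih =>
      by_cases hx : x ∈ A
      · rw [show k + 1 + n = (k + n) + 1 by omega, G.killedP_succ_sum hA hx]
        have h1 : ∀ z ∈ hA.toFinset, G.kerP x z * G.killedP A (k+n) z y
            = ∑ w ∈ hA.toFinset, G.kerP x z * (G.killedP A k z w * G.killedP A n w y) := by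
          intro z _
          rw [ih z, Finset.mul_sum]
        rw [Finset.sum_congr rfl h1, Finset.sum_comm]
        refine Finset.sum_congr rfl (fun w _ => ?_)
        rw [G.killedP_succ_sum hA hx, Finset.sum_mul]
        exact Finset.sum_congr rfl (fun z _ => by ring)
      · rw [G.killedP_of_notMem hx]
        have h1 : ∀ w ∈ hA.toFinset, G.killedP A (k+1) x w * G.killedP A n w y = 0 := by
          intro w _
          rw [G.killedP_of_notMem hx, zero_mul]
        rw [Finset.sum_congr rfl h1, Finset.sum_const, smul_zero]

lemma killedP_one_eq {A : Set Γ} (x y : Γ) :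
    G.killedP A 1 x y = if x ∈ A ∧ y ∈ A then G.kerP x y else 0 := by
  rw [G.killedP_succ_def]
  by_cases hx : x ∈ A
  · rw [if_pos hx]
    rw [tsum_eq_single y (fun z hz => by
      rw [G.killedP_zero_def, if_neg (by rintro ⟨h1, -⟩; exact hz h1), mul_zero])]
    rw [G.killedP_zero_def]
    by_cases hy : y ∈ A
    · simp [hy, hx]
    · simp [hy, hx]
  · rw [if_neg hx]
    simp [hx]

lemma kerP_rev (hp : 0 < p) (hker : ∀ x y, G.adj x y → p ≤ G.kerP x y) (x y : Γ) :
    G.kerP x y * G.vtx x = G.kerP y x * G.vtx y := by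
  rw [WGraph.kerP, WGraph.kerP, div_mul_cancel₀ _ (G.vtx_pos hp hker x).ne',
    div_mul_cancel₀ _ (G.vtx_pos hp hker y).ne', G.w_symm x y]

lemma killedP_one_rev (hp : 0 < p) (hker : ∀ x y, G.adj x y → p ≤ G.kerP x y)
    {A : Set Γ} (x y : Γ) :
    G.killedP A 1 x y * G.vtx x = G.killedP A 1 y x * G.vtx y := by
  rw [G.killedP_one_eq, G.killedP_one_eq]
  by_cases hx : x ∈ A <;> by_cases hy : y ∈ A <;>
    simp [hx, hy, G.kerP_rev hp hker x y]

lemma killedP_rev (hp : 0 < p) (hker : ∀ x y, G.adj x y → p ≤ G.kerP x y)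
    {A : Set Γ} (hA : A.Finite) (n : ℕ) (x y : Γ) :
    G.killedP A n x y * G.vtx x = G.killedP A n y x * G.vtx y := by
  induction n generalizing x y with
  | zero =>
      rw [G.killedP_zero_def, G.killedP_zero_def]
      by_cases hxy : x = y
      · subst hxy; rfl
      · rw [if_neg (by rintro ⟨h, -⟩; exact hxy h), if_neg (by rintro ⟨h, -⟩; exact hxy h.symm)]
        simp
  | succ k ih =>
      rw [show k + 1 = k + 1 from rfl, G.killedP_add hA k 1 x y,
        show k + 1 = 1 + k by omega, G.killedP_add hA 1 k y x,
        Finset.sum_mul, Finset.sum_mul]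
      refine Finset.sum_congr rfl (fun w _ => ?_)
      calc G.killedP A k x w * G.killedP A 1 w y * G.vtx x
          = (G.killedP A k x w * G.vtx x) * G.killedP A 1 w y := by ring
        _ = (G.killedP A k w x * G.vtx w) * G.killedP A 1 w y := by rw [ih w x]
        _ = G.killedP A k w x * (G.killedP A 1 w y * G.vtx w) := by ring
        _ = G.killedP A k w x * (G.killedP A 1 y w * G.vtx y) := by
              rw [G.killedP_one_rev hp hker w y]
        _ = G.killedP A 1 y w * G.killedP A k w x * G.vtx y := by ring

lemma surv_add_le (hp : 0 < p) (hker : ∀ x y, G.adj x y → p ≤ G.kerP x y)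
    {A : Set Γ} (hA : A.Finite) (a b : ℕ) (x : Γ) {M : ℝ} (hM0 : 0 ≤ M)
    (hM : ∀ z ∈ A, G.surv A b z ≤ M) :
    G.surv A (a + b) x ≤ G.surv A a x * M := by
  rw [G.surv_eq_sum hA]
  have h1 : ∀ y ∈ hA.toFinset, G.killedP A (a+b) x y
      = ∑ w ∈ hA.toFinset, G.killedP A a x w * G.killedP A b w y :=
    fun y _ => G.killedP_add hA a b x y
  rw [Finset.sum_congr rfl h1, Finset.sum_comm]
  have h2 : ∀ w ∈ hA.toFinset,
      ∑ y ∈ hA.toFinset, G.killedP A a x w * G.killedP A b w y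
        = G.killedP A a x w * G.surv A b w := by
    intro w _
    rw [G.surv_eq_sum hA, Finset.mul_sum]
  rw [Finset.sum_congr rfl h2]
  calc ∑ w ∈ hA.toFinset, G.killedP A a x w * G.surv A b w
      ≤ ∑ w ∈ hA.toFinset, G.killedP A a x w * M := by
        refine Finset.sum_le_sum (fun w hw => ?_)
        exact mul_le_mul_of_nonneg_left (hM w (hA.mem_toFinset.mp hw))
          (G.killedP_nonneg hp hker a x w)
    _ = G.surv A a x * M := by rw [G.surv_eq_sum hA, Finset.sum_mul]

end Aux11b

section Aux11
variable {Γ : Type*} (G : WGraph Γ) {p : ℝ}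

/-! #### exit estimates and summability -/

lemma surv_path_exit (hp : 0 < p) (hker : ∀ x y, G.adj x y → p ≤ G.kerP x y)
    {A : Set Γ} (hA : A.Finite) :
    ∀ (L : ℕ) (x v : Γ), G.adjN L x v → v ∉ A → G.surv A L x ≤ 1 - p ^ L := by
  intro L
  induction L with
  | zero =>
      intro x v hxv hv
      rw [show G.adjN 0 x v = (x = v) from rfl] at hxv
      subst hxv
      rw [G.surv_of_notMem hv, pow_zero]
      norm_num
  | succ L ih =>
      intro x v hxv hv
      have hple : p ^ (L+1) ≤ 1 := pow_le_one₀ hp.le (G.p_le_one hp hker)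
      by_cases hx : x ∈ A
      · obtain ⟨u, hxu, hu⟩ := hxv
        rw [G.surv_succ hA hx]
        by_cases hu' : u ∈ hA.toFinset
        · have hrest : ∑ z ∈ hA.toFinset.erase u, G.kerP x z * G.surv A L z
              ≤ ∑ z ∈ hA.toFinset.erase u, G.kerP x z := by
            refine Finset.sum_le_sum (fun z _ => ?_)
            have h1 := G.kerP_nonneg hp hker x z
            have h2 := G.surv_le_one hp hker hA L z
            have h3 := G.surv_nonneg hp hker (A := A) L z
            nlinarith
          have hsum : ∑ z ∈ hA.toFinset.erase u, G.kerP x z + G.kerP x u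
              = ∑ z ∈ hA.toFinset, G.kerP x z := Finset.sum_erase_add _ _ hu'
          have hker1 : ∑ z ∈ hA.toFinset, G.kerP x z ≤ 1 := G.sum_kerP_le hp hker x _
          have hiter : G.surv A L u ≤ 1 - p ^ L := ih u v hu hv
          have hkp : p ≤ G.kerP x u := hker x u hxu
          have hsplit : ∑ z ∈ hA.toFinset, G.kerP x z * G.surv A L z
              = ∑ z ∈ hA.toFinset.erase u, G.kerP x z * G.surv A L z
                + G.kerP x u * G.surv A L u := (Finset.sum_erase_add _ _ hu').symm
          rw [hsplit]
          have hpL : (0:ℝ) ≤ p ^ L := pow_nonneg hp.le L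
          have hkk : G.kerP x u * G.surv A L u ≤ G.kerP x u * (1 - p ^ L) :=
            mul_le_mul_of_nonneg_left hiter (G.kerP_nonneg hp hker x u)
          have hfin : G.kerP x u * (1 - p^L) + (1 - G.kerP x u) ≤ 1 - p^(L+1) := by
            have : p * p^L ≤ G.kerP x u * p^L := mul_le_mul_of_nonneg_right hkp hpL
            have hpow : p^(L+1) = p * p^L := by ring
            nlinarith
          nlinarith
        · have huA : u ∉ A := fun h => hu' (hA.mem_toFinset.mpr h)
          have hsum2 : ∑ z ∈ insert u hA.toFinset, G.kerP x z ≤ 1 :=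
            G.sum_kerP_le hp hker x _
          rw [Finset.sum_insert hu'] at hsum2
          have hkp : p ≤ G.kerP x u := hker x u hxu
          have h4 : ∑ z ∈ hA.toFinset, G.kerP x z * G.surv A L z
              ≤ ∑ z ∈ hA.toFinset, G.kerP x z := by
            refine Finset.sum_le_sum (fun z _ => ?_)
            have h1 := G.kerP_nonneg hp hker x z
            have h2 := G.surv_le_one hp hker hA L z
            have h3 := G.surv_nonneg hp hker (A := A) L z
            nlinarith
          have h5 : p ^ (L+1) ≤ p := by
            have := pow_le_pow_of_le_one hp.le (G.p_le_one hp hker) (show 1 ≤ L+1 by omega)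
            rwa [pow_one] at this
          linarith
      · rw [G.surv_of_notMem hx]
        linarith

lemma surv_ball_theta (hp : 0 < p) (hker : ∀ x y, G.adj x y → p ≤ G.kerP x y)
    (x₀ : Γ) (R : ℕ) (hR : 0 < R) :
    ∀ z ∈ G.ball x₀ (R:ℝ), G.surv (G.ball x₀ (R:ℝ)) (2*R) z ≤ 1 - p ^ (2*R) := by
  intro z hz
  have hB : (G.ball x₀ (R:ℝ)).Finite := G.ball_finite hp hker x₀ (R:ℝ)
  obtain ⟨v, hv⟩ := G.exists_dist_eq hp hker x₀ R
  have hvB : v ∉ G.ball x₀ (R:ℝ) := by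
    rw [G.mem_ball_nat, hv]
    omega
  have hdz : G.dist x₀ z < R := G.mem_ball_nat.mp hz
  have hpath : G.adjN (G.dist z x₀ + R) z v :=
    G.adjN_comp (G.dist_spec z x₀) (hv ▸ G.dist_spec x₀ v)
  have hL : G.dist z x₀ + R ≤ 2*R := by
    rw [G.dist_comm' z x₀]
    omega
  calc G.surv (G.ball x₀ (R:ℝ)) (2*R) z
      ≤ G.surv (G.ball x₀ (R:ℝ)) (G.dist z x₀ + R) z := G.surv_mono hp hker hB hL z
    _ ≤ 1 - p ^ (G.dist z x₀ + R) := G.surv_path_exit hp hker hB _ z v hpath hvB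
    _ ≤ 1 - p ^ (2*R) := by
        have := pow_le_pow_of_le_one hp.le (G.p_le_one hp hker) hL
        linarith

lemma sum_range_surv_le (hp : 0 < p) (hker : ∀ x y, G.adj x y → p ≤ G.kerP x y)
    {A : Set Γ} (hA : A.Finite) (m₀ : ℕ) (hm₀ : 0 < m₀) {θ : ℝ} (hθ0 : 0 ≤ θ)
    (hθ1 : θ < 1) (hsup : ∀ z ∈ A, G.surv A m₀ z ≤ θ) (x : Γ) :
    ∀ M, ∑ n ∈ Finset.range M, G.surv A n x ≤ m₀ / (1 - θ) := by
  have h1θ : (0:ℝ) < 1 - θ := by linarith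
  intro M
  induction M using Nat.strong_induction_on with
  | _ M ihM =>
  rcases le_or_gt M m₀ with hM | hM
  · calc ∑ n ∈ Finset.range M, G.surv A n x ≤ ∑ n ∈ Finset.range M, 1 :=
        Finset.sum_le_sum (fun n _ => G.surv_le_one hp hker hA n x)
      _ = M := by simp
      _ ≤ m₀ := by exact_mod_cast hM
      _ ≤ m₀ / (1-θ) := by
          rw [le_div_iff₀ h1θ]
          nlinarith [Nat.cast_nonneg (α := ℝ) m₀]
  · have hceq : ∑ n ∈ Finset.range m₀, G.surv A n x
        + ∑ n ∈ Finset.Ico m₀ M, G.surv A n x = ∑ n ∈ Finset.range M, G.surv A n x := by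
      simp only [Finset.range_eq_Ico]
      exact Finset.sum_Ico_consecutive _ (by omega) (by omega)
    have h2 : ∑ n ∈ Finset.range m₀, G.surv A n x ≤ m₀ := by
      calc ∑ n ∈ Finset.range m₀, G.surv A n x ≤ ∑ n ∈ Finset.range m₀, 1 :=
          Finset.sum_le_sum (fun n _ => G.surv_le_one hp hker hA n x)
        _ = m₀ := by simp
    have h3 : ∑ n ∈ Finset.Ico m₀ M, G.surv A n x
        = ∑ n ∈ Finset.range (M - m₀), G.surv A (m₀ + n) x := by
      rw [Finset.sum_Ico_eq_sum_range]
    have h4 : ∑ n ∈ Finset.range (M - m₀), G.surv A (m₀ + n) x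
        ≤ θ * ∑ n ∈ Finset.range (M - m₀), G.surv A n x := by
      rw [Finset.mul_sum]
      refine Finset.sum_le_sum (fun n _ => ?_)
      have := G.surv_add_le hp hker hA n m₀ x hθ0 hsup
      rw [show m₀ + n = n + m₀ by omega]
      linarith [this]
    have h5 : ∑ n ∈ Finset.range (M - m₀), G.surv A n x ≤ m₀ / (1-θ) :=
      ihM (M - m₀) (by omega)
    have h6 : (0:ℝ) ≤ ∑ n ∈ Finset.range (M - m₀), G.surv A n x :=
      Finset.sum_nonneg (fun n _ => G.surv_nonneg hp hker (A := A) n x)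
    have h7 : θ * ∑ n ∈ Finset.range (M - m₀), G.surv A n x ≤ θ * (m₀ / (1-θ)) :=
      mul_le_mul_of_nonneg_left h5 hθ0
    have key : ∑ n ∈ Finset.range M, G.surv A n x ≤ m₀ + θ * (m₀ / (1-θ)) := by
      rw [← hceq]
      linarith
    have : (m₀ : ℝ) + θ * (m₀ / (1-θ)) = m₀ / (1-θ) := by
      field_simp
      ring
    linarith

lemma summable_surv (hp : 0 < p) (hker : ∀ x y, G.adj x y → p ≤ G.kerP x y)
    {A : Set Γ} (hA : A.Finite) (m₀ : ℕ) (hm₀ : 0 < m₀) {θ : ℝ} (hθ0 : 0 ≤ θ)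
    (hθ1 : θ < 1) (hsup : ∀ z ∈ A, G.surv A m₀ z ≤ θ) (x : Γ) :
    Summable (fun n => G.surv A n x) :=
  summable_of_sum_range_le (fun n => G.surv_nonneg hp hker (A := A) n x)
    (G.sum_range_surv_le hp hker hA m₀ hm₀ hθ0 hθ1 hsup x)

lemma tsum_surv_le (hp : 0 < p) (hker : ∀ x y, G.adj x y → p ≤ G.kerP x y)
    {A : Set Γ} (hA : A.Finite) (m₀ : ℕ) (hm₀ : 0 < m₀) {θ : ℝ} (hθ0 : 0 ≤ θ)
    (hθ1 : θ < 1) (hsup : ∀ z ∈ A, G.surv A m₀ z ≤ θ) (x : Γ) :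
    ∑' n, G.surv A n x ≤ m₀ / (1 - θ) :=
  Real.tsum_le_of_sum_range_le (fun n => G.surv_nonneg hp hker (A := A) n x)
    (G.sum_range_surv_le hp hker hA m₀ hm₀ hθ0 hθ1 hsup x)

lemma killedP_le_surv (hp : 0 < p) (hker : ∀ x y, G.adj x y → p ≤ G.kerP x y)
    {A : Set Γ} (hA : A.Finite) (n : ℕ) (x y : Γ) :
    G.killedP A n x y ≤ G.surv A n x := by
  by_cases hy : y ∈ A
  · rw [G.surv_eq_sum hA]
    exact Finset.single_le_sum (fun z _ => G.killedP_nonneg hp hker n x z)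
      (hA.mem_toFinset.mpr hy)
  · have : G.killedP A n x y = 0 := by
      by_contra h
      exact hy (G.killedP_support h).2
    rw [this]
    exact G.surv_nonneg hp hker (A := A) n x

/-! #### mean exit time identities -/

lemma exitE_nonneg' (A : Set Γ) (x : Γ) (hp : 0 < p)
    (hker : ∀ x y, G.adj x y → p ≤ G.kerP x y) : 0 ≤ G.exitE A x :=
  tsum_nonneg (fun y => tsum_nonneg (fun n => G.killedP_nonneg hp hker n x (y : Γ)))

lemma exitE_eq_tsum_surv (hp : 0 < p) (hker : ∀ x y, G.adj x y → p ≤ G.kerP x y)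
    {A : Set Γ} (hA : A.Finite) (m₀ : ℕ) (hm₀ : 0 < m₀) {θ : ℝ} (hθ0 : 0 ≤ θ)
    (hθ1 : θ < 1) (hsup : ∀ z ∈ A, G.surv A m₀ z ≤ θ) (x : Γ) :
    G.exitE A x = ∑' n, G.surv A n x := by
  have hsummable : ∀ y : Γ, Summable (fun n => G.killedP A n x y) := by
    intro y
    refine Summable.of_nonneg_of_le (fun n => G.killedP_nonneg hp hker n x y)
      (fun n => G.killedP_le_surv hp hker hA n x y)
      (G.summable_surv hp hker hA m₀ hm₀ hθ0 hθ1 hsup x)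
  rw [WGraph.exitE, tsum_subtype]
  rw [tsum_eq_sum (s := hA.toFinset) (fun y hy =>
    Set.indicator_of_notMem (fun hyA => hy (hA.mem_toFinset.mpr hyA)) _)]
  have hterm : ∀ y ∈ hA.toFinset, A.indicator (G.greenF A x) y
      = ∑' n, G.killedP A n x y := by
    intro y hy
    rw [Set.indicator_of_mem (hA.mem_toFinset.mp hy)]
    rfl
  rw [Finset.sum_congr rfl hterm]
  rw [← Summable.tsum_finsetSum (fun y _ => hsummable y)]
  exact tsum_congr (fun n => (G.surv_eq_sum hA n x).symm)

lemma one_le_exitE (hp : 0 < p) (hker : ∀ x y, G.adj x y → p ≤ G.kerP x y)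
    {A : Set Γ} (hA : A.Finite) (m₀ : ℕ) (hm₀ : 0 < m₀) {θ : ℝ} (hθ0 : 0 ≤ θ)
    (hθ1 : θ < 1) (hsup : ∀ z ∈ A, G.surv A m₀ z ≤ θ) {x : Γ} (hx : x ∈ A) :
    1 ≤ G.exitE A x := by
  rw [G.exitE_eq_tsum_surv hp hker hA m₀ hm₀ hθ0 hθ1 hsup x]
  have h1 := Summable.le_tsum (G.summable_surv hp hker hA m₀ hm₀ hθ0 hθ1 hsup x) 0
    (fun n _ => G.surv_nonneg hp hker (A := A) n x)
  rw [G.surv_zero_eq_one hx] at h1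
  exact h1

lemma exitE_recur (hp : 0 < p) (hker : ∀ x y, G.adj x y → p ≤ G.kerP x y)
    {A : Set Γ} (hA : A.Finite) (m₀ : ℕ) (hm₀ : 0 < m₀) {θ : ℝ} (hθ0 : 0 ≤ θ)
    (hθ1 : θ < 1) (hsup : ∀ z ∈ A, G.surv A m₀ z ≤ θ) {x : Γ} (hx : x ∈ A) :
    G.exitE A x = 1 + ∑ z ∈ hA.toFinset, G.kerP x z * G.exitE A z := by
  have hsumm : ∀ z : Γ, Summable (fun n => G.surv A n z) :=
    fun z => G.summable_surv hp hker hA m₀ hm₀ hθ0 hθ1 hsup z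
  rw [G.exitE_eq_tsum_surv hp hker hA m₀ hm₀ hθ0 hθ1 hsup x]
  rw [Summable.tsum_eq_zero_add (hsumm x)]
  rw [G.surv_zero_eq_one hx]
  congr 1
  have h1 : ∀ n : ℕ, G.surv A (n+1) x = ∑ z ∈ hA.toFinset, G.kerP x z * G.surv A n z :=
    fun n => G.surv_succ hA hx n
  rw [tsum_congr h1]
  rw [Summable.tsum_finsetSum (fun z _ => (hsumm z).mul_left (G.kerP x z))]
  refine Finset.sum_congr rfl (fun z hz => ?_)
  rw [tsum_mul_left, G.exitE_eq_tsum_surv hp hker hA m₀ hm₀ hθ0 hθ1 hsup z]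

lemma PopB_eq_sum {A : Set Γ} (hA : A.Finite) (v : Γ → ℝ) (y : Γ) :
    G.PopB A v y = ∑ z ∈ hA.toFinset, G.kerP y z * v z := by
  rw [WGraph.PopB]
  rw [tsum_eq_sum (s := hA.toFinset) (fun z hz =>
    if_neg (fun hzA => hz (hA.mem_toFinset.mpr hzA)))]
  exact Finset.sum_congr rfl (fun z hz => if_pos (hA.mem_toFinset.mp hz))

/-! #### wsum lemmas and W0 facts -/

lemma wsum_eq_sum {A : Set Γ} (hA : A.Finite) (v : Γ → ℝ) :
    G.wsum A v = ∑ y ∈ hA.toFinset, v y * G.vtx y := by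
  rw [WGraph.wsum, tsum_subtype A (fun t => v t * G.vtx t)]
  rw [tsum_eq_sum (s := hA.toFinset) (fun y hy =>
    Set.indicator_of_notMem (fun hyA => hy (hA.mem_toFinset.mpr hyA)) _)]
  exact Finset.sum_congr rfl (fun y hy => Set.indicator_of_mem (hA.mem_toFinset.mp hy) _)

lemma wsum_nonneg' {A : Set Γ} (hA : A.Finite) {v : Γ → ℝ} (hv : ∀ y, 0 ≤ v y) :
    0 ≤ G.wsum A v := by
  rw [G.wsum_eq_sum hA]
  exact Finset.sum_nonneg (fun y _ => mul_nonneg (hv y) (G.vtx_nonneg y))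

lemma F_ge_R {F : Γ → ℕ → ℝ} (hInc : ∀ (x : Γ) (R : ℕ), F x R + 1 ≤ F x (R+1))
    (hF0 : ∀ x : Γ, 0 ≤ F x 0) : ∀ (x : Γ) (R : ℕ), (R:ℝ) ≤ F x R := by
  intro x R
  induction R with
  | zero => simpa using hF0 x
  | succ n ih =>
      have := hInc x n
      push_cast
      linarith

/-! #### the exit time supersolution -/

lemma exit_supersol (hp : 0 < p) (hker : ∀ x y, G.adj x y → p ≤ G.kerP x y)
    (x₀ : Γ) (R : ℕ) (hR : 0 < R) (N T : ℝ) :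
    G.supSolOn (G.ball x₀ (R:ℝ)) T
      (fun n z => G.exitE (G.ball x₀ (R:ℝ)) z + max (N - n) 0) := by
  set B := G.ball x₀ (R:ℝ) with hBdef
  have hB : B.Finite := G.ball_finite hp hker x₀ (R:ℝ)
  have hθ0 : (0:ℝ) ≤ 1 - p ^ (2*R) := by
    have := pow_le_one₀ hp.le (G.p_le_one hp hker) (n := 2*R)
    linarith
  have hθ1 : 1 - p ^ (2*R) < 1 := by
    have : 0 < p ^ (2*R) := pow_pos hp _
    linarith
  have hsup := G.surv_ball_theta hp hker x₀ R hR
  constructor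
  · intro n y
    exact add_nonneg (G.exitE_nonneg' B y hp hker) (le_max_right _ _)
  · intro n y hy _
    beta_reduce
    push_cast
    have hrec := G.exitE_recur hp hker hB (2*R) (by omega) hθ0 hθ1 hsup hy
    rw [WGraph.lapB, G.PopB_eq_sum hB]
    have hexp : ∀ z ∈ hB.toFinset,
        G.kerP y z * (G.exitE B z + max (N - n) 0)
          = G.kerP y z * G.exitE B z + G.kerP y z * max (N - n) 0 := by
      intro z _; ring
    rw [Finset.sum_congr rfl hexp, Finset.sum_add_distrib]
    have h1 : ∑ z ∈ hB.toFinset, G.kerP y z * G.exitE B z = G.exitE B y - 1 := by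
      linarith [hrec]
    have h2 : ∑ z ∈ hB.toFinset, G.kerP y z * max (N - n) 0
        ≤ max (N - n) 0 := by
      rw [← Finset.sum_mul]
      have hs := G.sum_kerP_le hp hker y hB.toFinset
      have hm : (0:ℝ) ≤ max (N - n) 0 := le_max_right _ _
      nlinarith [Finset.sum_nonneg (fun z (_ : z ∈ hB.toFinset) => G.kerP_nonneg hp hker y z)]
    have h3 : max (N - n) 0 ≤ max (N - ((n:ℝ)+1)) 0 + 1 := by
      apply max_le
      · have : N - ((n:ℝ)+1) ≤ max (N - ((n:ℝ)+1)) 0 := le_max_left _ _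
        linarith
      · positivity
    linarith

/-! #### Goal 2 : F ≤ C * E via PSMV -/

set_option maxHeartbeats 2000000 in
lemma goal2 (hp : 0 < p) (hker : ∀ x y, G.adj x y → p ≤ G.kerP x y)
    {F : Γ → ℕ → ℝ} (hInc : ∀ (x : Γ) (R : ℕ), F x R + 1 ≤ F x (R+1))
    (hF0 : ∀ x : Γ, 0 ≤ F x 0) (hPSMV : G.PSMV F) :
    ∃ C2 > (0:ℝ), ∀ (x : Γ) (R : ℕ), 0 < R →
      F x R ≤ C2 * G.exitE (G.ball x (R:ℝ)) x := by
  obtain ⟨ε, hε0, hε1, hps⟩ := hPSMV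
  obtain ⟨δ, hδ, c, hc, hps⟩ := hps (ε/8) (ε/4) (ε/2) (3*ε/4) 1
    (by positivity) (by linarith) (by linarith) (by linarith) (by linarith) (by linarith)
  refine ⟨1024/(c*ε) + 64/ε + 1, by positivity, ?_⟩
  intro x R hR
  set B := G.ball x (R:ℝ) with hBdef
  have hB : B.Finite := G.ball_finite hp hker x (R:ℝ)
  have hθ0 : (0:ℝ) ≤ 1 - p ^ (2*R) := by
    have := pow_le_one₀ hp.le (G.p_le_one hp hker) (n := 2*R)
    linarith
  have hθ1 : 1 - p ^ (2*R) < 1 := by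
    have : 0 < p ^ (2*R) := pow_pos hp _
    linarith
  have hsup := G.surv_ball_theta hp hker x R hR
  set Fx := F x R with hFxdef
  have hFx1 : 1 ≤ Fx := by
    have h1 := F_ge_R hInc hF0 x R
    have : (1:ℝ) ≤ (R:ℝ) := by exact_mod_cast hR
    linarith
  have hFxpos : 0 < Fx := by linarith
  have hxB : x ∈ B := G.mem_ball_self' (by exact_mod_cast hR)
  have hE1 : 1 ≤ G.exitE B x :=
    G.one_le_exitE hp hker hB (2*R) (by omega) hθ0 hθ1 hsup hxB
  rcases lt_or_ge Fx (64/ε) with hcase | hcase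
  · have h64 : 0 < 64/ε := by positivity
    have h1 : Fx ≤ (64/ε) * G.exitE B x := by nlinarith
    have h2 : 0 ≤ (1024/(c*ε)) * G.exitE B x := by positivity
    have h3 : 0 ≤ 1 * G.exitE B x := by linarith
    rw [hBdef] at h1 h2 h3 ⊢
    nlinarith
  · -- the main PSMV argument
    set N := (ε/4) * Fx with hNdef
    set u := fun (n:ℕ) (z:Γ) => G.exitE B z + max (N - n) 0 with hudef
    have hsol : G.supSolOn (G.ball x (R:ℝ)) (1 * F x R) u :=
      G.exit_supersol hp hker x R hR N (1 * F x R)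
    set k := ⌈(ε/2)*Fx⌉₊ with hkdef
    have hk1 : (ε/2)*Fx ≤ (k:ℝ) := Nat.le_ceil _
    have hquarter : 16 ≤ (ε/4)*Fx := by
      have h1 : (ε/4)*(64/ε) ≤ (ε/4)*Fx :=
        mul_le_mul_of_nonneg_left hcase (by positivity)
      have he : (ε/4)*(64/ε) = 16 := by field_simp; ring
      linarith
    have hk2 : (k:ℝ) ≤ (3*ε/4)*Fx := by
      have hlt : (k:ℝ) < (ε/2)*Fx + 1 := Nat.ceil_lt_add_one (by positivity)
      linarith
    have hRpos : (0:ℝ) < (R:ℝ) := by exact_mod_cast hR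
    have hxball : x ∈ G.ball x (δ * R) := G.mem_ball_self' (mul_pos hδ hRpos)
    have hmain := hps x R hR u hsol k x hxball hk1 hk2
    have hNk : N ≤ (k:ℝ) := by
      have : (ε/4)*Fx ≤ (ε/2)*Fx := by nlinarith
      simp only [hNdef]
      linarith
    have huk : u k x + u (k+1) x = 2 * G.exitE B x := by
      simp only [hudef]
      rw [max_eq_right (by linarith : N - (k:ℝ) ≤ 0),
        max_eq_right (by push_cast; linarith : N - ((k+1:ℕ):ℝ) ≤ 0)]
      ring
    set A' := G.ball x (δ * (R:ℝ)) with hA'def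
    have hA' : A'.Finite := G.ball_finite hp hker x (δ * (R:ℝ))
    have hVeq : G.vol x (δ * (R:ℝ)) = G.setVol A' := rfl
    have hVpos : 0 < G.vol x (δ * (R:ℝ)) := by
      rw [hVeq]
      exact G.setVol_pos hp hker hA' hxball
    set V := G.vol x (δ * (R:ℝ)) with hVdef
    set aR := (ε/8)*Fx with haRdef
    set bR := (3*ε/16)*Fx with hbRdef
    have haR0 : (0:ℝ) ≤ aR := by positivity
    have hbR0 : (0:ℝ) ≤ bR := by positivity
    have hgap : aR + 2 ≤ bR := by
      simp only [haRdef, hbRdef]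
      linarith [hquarter]
    have h_ab : ⌈aR⌉₊ ≤ ⌊bR⌋₊ := by
      apply Nat.le_floor
      have := Nat.ceil_lt_add_one haR0
      linarith
    set S := Finset.Icc ⌈aR⌉₊ ⌊bR⌋₊ with hSdef
    have hcardS : (ε/32)*Fx ≤ (S.card:ℝ) := by
      have hced : S.card = ⌊bR⌋₊ + 1 - ⌈aR⌉₊ := Nat.card_Icc _ _
      have hcast : (S.card:ℝ) = (⌊bR⌋₊:ℝ) + 1 - (⌈aR⌉₊:ℝ) := by
        rw [hced]
        push_cast [Nat.cast_sub (by omega : ⌈aR⌉₊ ≤ ⌊bR⌋₊ + 1)]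
        ring
      have hfl : bR - 1 < (⌊bR⌋₊:ℝ) := Nat.sub_one_lt_floor bR
      have hcl : (⌈aR⌉₊:ℝ) < aR + 1 := Nat.ceil_lt_add_one haR0
      have hba : bR - aR = (ε/16)*Fx := by rw [haRdef, hbRdef]; ring
      have h32 : 2 ≤ (ε/32)*Fx := by linarith [hquarter]
      linarith
    have hterm : ∀ i ∈ S, (ε/8)*Fx ≤ (i:ℝ) ∧ (i:ℝ) ≤ (ε/4)*Fx := by
      intro i hi
      obtain ⟨hi1, hi2⟩ := Finset.mem_Icc.mp hi
      constructor
      · have h1 : aR ≤ (⌈aR⌉₊:ℝ) := Nat.le_ceil _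
        have h2 : ((⌈aR⌉₊:ℕ):ℝ) ≤ (i:ℝ) := by exact_mod_cast hi1
        simp only [haRdef] at h1
        linarith
      · have h1 : ((i:ℕ):ℝ) ≤ (⌊bR⌋₊:ℝ) := by exact_mod_cast hi2
        have h2 : (⌊bR⌋₊:ℝ) ≤ bR := Nat.floor_le hbR0
        simp only [hbRdef] at h2
        linarith
    have hulow : ∀ i ∈ S, ∀ z : Γ, (ε/32)*Fx ≤ u i z + u (i+1) z := by
      intro i hi z
      have hi2' : (i:ℝ) ≤ (3*ε/16)*Fx := by
        obtain ⟨-, hup⟩ := Finset.mem_Icc.mp hi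
        have ha : ((i:ℕ):ℝ) ≤ (⌊bR⌋₊:ℝ) := by exact_mod_cast hup
        have hb : (⌊bR⌋₊:ℝ) ≤ bR := Nat.floor_le hbR0
        simp only [hbRdef] at hb
        linarith
      have h1 : 0 ≤ u i z := add_nonneg (G.exitE_nonneg' B z hp hker) (le_max_right _ _)
      have h2 : N - ((i:ℝ)+1) ≤ max (N - ((i:ℝ)+1)) 0 := le_max_left _ _
      have h3 : max (N - ((i:ℝ)+1)) 0 ≤ u (i+1) z := by
        simp only [hudef]
        push_cast
        have := G.exitE_nonneg' B z hp hker
        linarith [le_max_right (N - ((i:ℝ)+1)) (0:ℝ)]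
      have h4 : (ε/32)*Fx ≤ N - ((i:ℝ)+1) := by
        simp only [hNdef]
        linarith [hquarter, hi2']
      exact le_trans (le_trans h4 (le_trans h2 h3)) (le_add_of_nonneg_left h1)
    have hwsum : ∀ i ∈ S,
        ((ε/32)*Fx) * V ≤ G.wsum A' (fun z => u i z + u (i+1) z) := by
      intro i hi
      have hVsum : V = ∑ y ∈ hA'.toFinset, G.vtx y := by
        rw [hVdef]
        exact G.setVol_eq_sum hA'
      rw [G.wsum_eq_sum hA', hVsum, Finset.mul_sum]
      refine Finset.sum_le_sum (fun z _ => ?_)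
      exact mul_le_mul_of_nonneg_right (hulow i hi z) (G.vtx_nonneg z)
    have hwnonneg : ∀ i : ℕ, 0 ≤ G.wsum A' (fun z => u i z + u (i+1) z) := by
      intro i
      refine G.wsum_nonneg' hA' (fun z => ?_)
      have h1 : 0 ≤ u i z := add_nonneg (G.exitE_nonneg' B z hp hker) (le_max_right _ _)
      have h2 : 0 ≤ u (i+1) z := add_nonneg (G.exitE_nonneg' B z hp hker) (le_max_right _ _)
      linarith
    have hstsum : (S.card:ℝ) * (((ε/32)*Fx) * V)
        ≤ G.stsum A' ((ε/8) * F x R) ((ε/4) * F x R) (fun i z => u i z + u (i+1) z) := by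
      rw [WGraph.stsum]
      set g := fun i:ℕ => if (ε/8) * F x R ≤ (i:ℝ) ∧ (i:ℝ) ≤ (ε/4) * F x R
        then G.wsum A' (fun z => u i z + u (i+1) z) else 0 with hgdef
      have hgsumm : Summable g := by
        apply summable_of_ne_finset_zero (s := Finset.range (⌊(ε/4)*Fx⌋₊+1))
        intro i hi
        simp only [Finset.mem_range] at hi
        have hgt : (⌊(ε/4)*Fx⌋₊:ℕ) < i := by omega
        have : (ε/4)*Fx < (i:ℝ) := by
          have := Nat.lt_of_floor_lt hgt
          exact this
        simp only [hgdef]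
        rw [if_neg]
        rintro ⟨-, hle⟩
        exact absurd hle (not_le.mpr this)
      have hg0 : ∀ i, 0 ≤ g i := by
        intro i
        simp only [hgdef]
        split
        · exact hwnonneg i
        · exact le_refl 0
      have hS_le : ∑ i ∈ S, g i ≤ ∑' i, g i :=
        Summable.sum_le_tsum S (fun i _ => hg0 i) hgsumm
      refine le_trans ?_ hS_le
      have hgS : ∀ i ∈ S, ((ε/32)*Fx) * V ≤ g i := by
        intro i hi
        simp only [hgdef]
        rw [if_pos (hterm i hi)]
        exact hwsum i hi
      calc (S.card:ℝ) * (((ε/32)*Fx) * V) = S.card • (((ε/32)*Fx) * V) := by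
            rw [nsmul_eq_mul]
        _ ≤ ∑ i ∈ S, g i := Finset.card_nsmul_le_sum S g _ hgS
    -- combine
    rw [huk] at hmain
    have hq0 : 0 < (ε/4 - ε/8) * F x R * V := by
      have : (ε/4 - ε/8) = ε/8 := by ring
      rw [this]
      positivity
    have hlhs1 : c / ((ε/4 - ε/8) * F x R * V) * ((S.card:ℝ) * (((ε/32)*Fx) * V))
        ≤ c / ((ε/4 - ε/8) * F x R * V)
          * G.stsum A' ((ε/8) * F x R) ((ε/4) * F x R) (fun i z => u i z + u (i+1) z) :=
      mul_le_mul_of_nonneg_left hstsum (by positivity)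
    have hlhs2 : c / ((ε/4 - ε/8) * F x R * V) * (((ε/32)*Fx) * (((ε/32)*Fx) * V))
        ≤ c / ((ε/4 - ε/8) * F x R * V) * ((S.card:ℝ) * (((ε/32)*Fx) * V)) := by
      apply mul_le_mul_of_nonneg_left ?_ (by positivity)
      have h1 : (0:ℝ) ≤ ((ε/32)*Fx) * V := by positivity
      exact mul_le_mul_of_nonneg_right hcardS h1
    have hkey : c * ε * Fx / 512 ≤ c / ((ε/4 - ε/8) * F x R * V)
        * (((ε/32)*Fx) * (((ε/32)*Fx) * V)) := by
      rw [div_mul_eq_mul_div, le_div_iff₀ hq0]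
      have hexpand : c * (((ε/32)*Fx) * (((ε/32)*Fx) * V))
          - c * ε * Fx / 512 * ((ε/4 - ε/8) * F x R * V)
          = c * ε^2 * Fx^2 * V * (1/1024 - 1/4096) := by
        rw [← hFxdef]
        ring
      nlinarith [mul_pos (mul_pos (mul_pos hc (mul_pos (mul_pos hε0 hε0)
        (mul_pos hFxpos hFxpos))) hVpos) (show (0:ℝ) < 1/1024 - 1/4096 by norm_num)]
    have hfinal : c * ε * Fx / 512 ≤ 2 * G.exitE B x := by
      calc c * ε * Fx / 512 ≤ _ := hkey
        _ ≤ _ := hlhs2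
        _ ≤ _ := hlhs1
        _ ≤ 2 * G.exitE B x := hmain
    have hE0 : 0 < G.exitE B x := by linarith
    have hgoal : Fx ≤ (1024/(c*ε)) * G.exitE B x := by
      rw [div_mul_eq_mul_div, le_div_iff₀ (by positivity : (0:ℝ) < c*ε)]
      nlinarith [hfinal]
    have hextra : 0 ≤ (64/ε + 1) * G.exitE B x := by positivity
    calc F x R = Fx := by rw [hFxdef]
      _ ≤ (1024/(c*ε)) * G.exitE B x := hgoal
      _ ≤ (1024/(c*ε) + 64/ε + 1) * G.exitE (G.ball x (R:ℝ)) x := by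
          rw [← hBdef]
          nlinarith

/-! #### Goal 1 ingredients -/

lemma killedP_subsol (hp : 0 < p) (hker : ∀ x y, G.adj x y → p ≤ G.kerP x y)
    (x₀ z : Γ) (R R' : ℕ)
    (hsub : G.ball x₀ (R:ℝ) ⊆ G.ball z (R':ℝ)) (T : ℝ) :
    G.subSolOn (G.ball z (R':ℝ)) T
      (fun i y => G.killedP (G.ball x₀ (R:ℝ)) i y z) := by
  set B := G.ball x₀ (R:ℝ) with hBdef
  have hB : B.Finite := G.ball_finite hp hker x₀ (R:ℝ)
  set B' := G.ball z (R':ℝ) with hB'def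
  have hB' : B'.Finite := G.ball_finite hp hker z (R':ℝ)
  have hsubf : hB.toFinset ⊆ hB'.toFinset := by
    intro v hv
    exact hB'.mem_toFinset.mpr (hsub (hB.mem_toFinset.mp hv))
  constructor
  · intro n y
    exact G.killedP_nonneg hp hker n y z
  · intro n y hy _
    beta_reduce
    rw [WGraph.lapB]
    have key : G.killedP B (n+1) y z ≤ G.PopB B' (fun v => G.killedP B n v z) y := by
      rw [G.PopB_eq_sum hB']
      by_cases hyB : y ∈ B
      · rw [G.killedP_succ_sum hB hyB]
        refine Finset.sum_le_sum_of_subset_of_nonneg hsubf (fun v _ _ => ?_)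
        exact mul_nonneg (G.kerP_nonneg hp hker y v) (G.killedP_nonneg hp hker n v z)
      · rw [G.killedP_of_notMem hyB]
        exact Finset.sum_nonneg (fun v _ =>
          mul_nonneg (G.kerP_nonneg hp hker y v) (G.killedP_nonneg hp hker n v z))
    linarith

lemma surv_sq_le (hp : 0 < p) (hker : ∀ x y, G.adj x y → p ≤ G.kerP x y)
    {A : Set Γ} (hA : A.Finite) (z : Γ) (n : ℕ) :
    G.surv A (2*n) z ^ 2 ≤ (G.killedP A (2*n) z z / G.vtx z) * G.setVol A := by
  have h2n : 2*n = n + n := by omega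
  have hexp : G.surv A (2*n) z
      = ∑ v ∈ hA.toFinset, G.killedP A n z v * G.surv A n v := by
    rw [G.surv_eq_sum hA, h2n]
    have h1 : ∀ y ∈ hA.toFinset, G.killedP A (n+n) z y
        = ∑ v ∈ hA.toFinset, G.killedP A n z v * G.killedP A n v y :=
      fun y _ => G.killedP_add hA n n z y
    rw [Finset.sum_congr rfl h1, Finset.sum_comm]
    exact Finset.sum_congr rfl (fun v _ => by rw [G.surv_eq_sum hA, Finset.mul_sum])
  have hfg : ∀ v ∈ hA.toFinset, G.killedP A n z v * G.surv A n v
      = (G.killedP A n z v / Real.sqrt (G.vtx v)) * (G.surv A n v * Real.sqrt (G.vtx v)) := by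
    intro v _
    have hv : Real.sqrt (G.vtx v) ≠ 0 :=
      (Real.sqrt_pos.mpr (G.vtx_pos hp hker v)).ne'
    field_simp
  have hCS := Finset.sum_mul_sq_le_sq_mul_sq hA.toFinset
    (fun v => G.killedP A n z v / Real.sqrt (G.vtx v))
    (fun v => G.surv A n v * Real.sqrt (G.vtx v))
  have hf2 : ∑ v ∈ hA.toFinset, (G.killedP A n z v / Real.sqrt (G.vtx v))^2
      = G.killedP A (2*n) z z / G.vtx z := by
    have h1 : ∀ v ∈ hA.toFinset, (G.killedP A n z v / Real.sqrt (G.vtx v))^2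
        = G.killedP A n z v * G.killedP A n v z / G.vtx z := by
      intro v _
      have hvp := G.vtx_pos hp hker v
      have hzp := G.vtx_pos hp hker z
      rw [div_pow, Real.sq_sqrt hvp.le]
      have hrev := G.killedP_rev hp hker hA n z v
      rw [pow_two]
      rw [show G.killedP A n z v * G.killedP A n z v / G.vtx v
          = G.killedP A n z v * (G.killedP A n z v * G.vtx z) / (G.vtx v * G.vtx z) by
        field_simp]
      rw [hrev]
      field_simp
    rw [Finset.sum_congr rfl h1, ← Finset.sum_div]
    congr 1
    rw [h2n, G.killedP_add hA n n z z]
  have hg2 : ∑ v ∈ hA.toFinset, (G.surv A n v * Real.sqrt (G.vtx v))^2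
      ≤ G.setVol A := by
    rw [G.setVol_eq_sum hA]
    refine Finset.sum_le_sum (fun v _ => ?_)
    have hvp := G.vtx_pos hp hker v
    rw [mul_pow, Real.sq_sqrt hvp.le]
    have h1 := G.surv_le_one hp hker hA n v
    have h2 := G.surv_nonneg hp hker (A := A) n v
    nlinarith [mul_nonneg (mul_nonneg h2 (sub_nonneg.mpr h1)) hvp.le,
      mul_le_mul_of_nonneg_right h1 hvp.le]
  calc G.surv A (2*n) z ^ 2
      = (∑ v ∈ hA.toFinset, (G.killedP A n z v / Real.sqrt (G.vtx v))
          * (G.surv A n v * Real.sqrt (G.vtx v)))^2 := by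
        rw [hexp, Finset.sum_congr rfl hfg]
    _ ≤ (∑ v ∈ hA.toFinset, (G.killedP A n z v / Real.sqrt (G.vtx v))^2)
          * ∑ v ∈ hA.toFinset, (G.surv A n v * Real.sqrt (G.vtx v))^2 := hCS
    _ ≤ (G.killedP A (2*n) z z / G.vtx z) * G.setVol A := by
        rw [hf2]
        apply mul_le_mul_of_nonneg_left hg2
        have := G.killedP_nonneg hp hker (A := A) (2*n) z z
        have := (G.vtx_pos hp hker z)
        positivity

lemma vol_anti_step (hp : 0 < p) (hker : ∀ x y, G.adj x y → p ≤ G.kerP x y)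
    {D : ℝ} (hD : 0 < D)
    (hVDl : ∀ (x : Γ) (r : ℝ), 0 < r → G.vol x (2*r) ≤ D * G.vol x r)
    (z : Γ) (r : ℕ) (hr : 0 < r) :
    (1 + D⁻¹*D⁻¹) * G.vol z (r:ℝ) ≤ G.vol z ((4*r : ℕ):ℝ) := by
  obtain ⟨v, hv⟩ := G.exists_dist_eq hp hker z (2*r)
  have hrR : (0:ℝ) < (r:ℝ) := by exact_mod_cast hr
  have hfin : ∀ (w : Γ) (s : ℝ), (G.ball w s).Finite := fun w s => G.ball_finite hp hker w s
  have hdisj : Disjoint (G.ball z (r:ℝ)) (G.ball v (r:ℝ)) := by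
    rw [Set.disjoint_left]
    intro y h1 h2
    have d1 : G.dist z y < r := G.mem_ball_nat.mp h1
    have d2 : G.dist v y < r := G.mem_ball_nat.mp h2
    have := G.dist_triangle' z y v
    rw [G.dist_comm' y v] at this
    omega
  have hsub2 : G.ball v (r:ℝ) ⊆ G.ball z ((4*r:ℕ):ℝ) := by
    intro y hy
    have d2 : G.dist v y < r := G.mem_ball_nat.mp hy
    rw [G.mem_ball_nat]
    have := G.dist_triangle' z v y
    omega
  have hsub1 : G.ball z (r:ℝ) ⊆ G.ball z ((4*r:ℕ):ℝ) := by
    intro y hy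
    have d1 : G.dist z y < r := G.mem_ball_nat.mp hy
    rw [G.mem_ball_nat]
    omega
  have hsub3 : G.ball z (r:ℝ) ⊆ G.ball v ((4*r:ℕ):ℝ) := by
    intro y hy
    have d1 : G.dist z y < r := G.mem_ball_nat.mp hy
    rw [G.mem_ball_nat]
    have := G.dist_triangle' v z y
    rw [G.dist_comm' v z] at this
    omega
  have hv4 : G.vol v ((4*r:ℕ):ℝ) ≤ D * (D * G.vol v (r:ℝ)) := by
    have h1 : G.vol v (2*(2*(r:ℝ))) ≤ D * G.vol v (2*(r:ℝ)) := hVDl v (2*(r:ℝ)) (by linarith)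
    have h2 : G.vol v (2*(r:ℝ)) ≤ D * G.vol v (r:ℝ) := hVDl v (r:ℝ) hrR
    have hcast : ((4*r:ℕ):ℝ) = 2*(2*(r:ℝ)) := by push_cast; ring
    rw [hcast]
    calc G.vol v (2*(2*(r:ℝ))) ≤ D * G.vol v (2*(r:ℝ)) := h1
      _ ≤ D * (D * G.vol v (r:ℝ)) := mul_le_mul_of_nonneg_left h2 hD.le
  have hzv : G.vol z (r:ℝ) ≤ G.vol v ((4*r:ℕ):ℝ) :=
    G.setVol_mono (hfin z _) (hfin v _) hsub3
  have hvr : G.vol z (r:ℝ) ≤ D * D * G.vol v (r:ℝ) := by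
    calc G.vol z (r:ℝ) ≤ G.vol v ((4*r:ℕ):ℝ) := hzv
      _ ≤ D * (D * G.vol v (r:ℝ)) := hv4
      _ = D * D * G.vol v (r:ℝ) := by ring
  have hunion : G.vol z (r:ℝ) + G.vol v (r:ℝ) ≤ G.vol z ((4*r:ℕ):ℝ) :=
    G.setVol_union_le (hfin z _) (hfin v _) (hfin z _) hdisj hsub1 hsub2
  have hDD : 0 < D * D := mul_pos hD hD
  have hvlow : D⁻¹ * D⁻¹ * G.vol z (r:ℝ) ≤ G.vol v (r:ℝ) := by
    rw [show D⁻¹ * D⁻¹ * G.vol z (r:ℝ) = G.vol z (r:ℝ) / (D*D) by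
      field_simp]
    rw [div_le_iff₀ hDD]
    linarith [hvr]
  linarith

lemma vol_anti_iter (hp : 0 < p) (hker : ∀ x y, G.adj x y → p ≤ G.kerP x y)
    {D : ℝ} (hD : 0 < D)
    (hVDl : ∀ (x : Γ) (r : ℝ), 0 < r → G.vol x (2*r) ≤ D * G.vol x r)
    (z : Γ) (r : ℕ) (hr : 0 < r) (j : ℕ) :
    (1 + D⁻¹*D⁻¹)^j * G.vol z (r:ℝ) ≤ G.vol z ((4^j*r : ℕ):ℝ) := by
  induction j with
  | zero => simp
  | succ k ih =>
      have hstep := G.vol_anti_step hp hker hD hVDl z (4^k*r) (by positivity)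
      have hq : (0:ℝ) < 1 + D⁻¹*D⁻¹ := by positivity
      have h1 : (1 + D⁻¹*D⁻¹)^(k+1) * G.vol z (r:ℝ)
          = (1 + D⁻¹*D⁻¹) * ((1 + D⁻¹*D⁻¹)^k * G.vol z (r:ℝ)) := by ring
      rw [h1]
      calc (1 + D⁻¹*D⁻¹) * ((1 + D⁻¹*D⁻¹)^k * G.vol z (r:ℝ))
          ≤ (1 + D⁻¹*D⁻¹) * G.vol z ((4^k*r : ℕ):ℝ) :=
            mul_le_mul_of_nonneg_left ih hq.le
        _ ≤ G.vol z ((4*(4^k*r) : ℕ):ℝ) := hstep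
        _ = G.vol z ((4^(k+1)*r : ℕ):ℝ) := by
            congr 2
            ring

set_option maxHeartbeats 2000000 in
lemma goal1 (hp : 0 < p) (hker : ∀ x y, G.adj x y → p ≤ G.kerP x y)
    {D : ℝ} (hD : 0 < D)
    (hVDl : ∀ (x : Γ) (r : ℝ), 0 < r → G.vol x (2*r) ≤ D * G.vol x r)
    {F : Γ → ℕ → ℝ} (hInc : ∀ (x : Γ) (R : ℕ), F x R + 1 ≤ F x (R+1))
    (hF0 : ∀ x : Γ, 0 ≤ F x 0) {CF β : ℝ} (hCF : 0 < CF)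
    (hregU : ∀ (x y : Γ) (R r : ℕ), 0 < r → r < R → G.dist x y < R →
      F x R / F y r ≤ CF * ((R:ℝ)/(r:ℝ)) ^ β)
    (hPMV : G.PMV F) :
    ∃ C1 > (0:ℝ), ∀ (x : Γ) (R : ℕ), 0 < R →
      G.exitE (G.ball x (R:ℝ)) x ≤ C1 * F x R := by
  obtain ⟨C, hC1, hpmv⟩ := hPMV 1 2 3 5 5 (by norm_num) (by norm_num) (by norm_num)
    (by norm_num) (by norm_num)
  have hq0 : (0:ℝ) < D⁻¹*D⁻¹ := by positivity
  obtain ⟨j, hj⟩ := pow_unbounded_of_one_lt (12*C) (show (1:ℝ) < 1 + D⁻¹*D⁻¹ by linarith)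
  set M : ℕ := 2*4^j with hMdef
  have h4j : 1 ≤ 4^j := Nat.one_le_pow j 4 (by norm_num)
  have hM2 : 2 ≤ M := by omega
  have hMpos : 0 < M := by omega
  have hMR0 : (0:ℝ) < (M:ℝ) := by exact_mod_cast hMpos
  have hMβ : 0 < (M:ℝ)^β := Real.rpow_pos_of_pos hMR0 β
  set K₀ : ℝ := 5*CF*(M:ℝ)^β with hK₀def
  have hK₀pos : 0 < K₀ := by positivity
  refine ⟨2*K₀+6, by positivity, ?_⟩
  intro x R hR
  set B := G.ball x (R:ℝ) with hBdef
  have hB : B.Finite := G.ball_finite hp hker x (R:ℝ)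
  have hRR : (0:ℝ) < (R:ℝ) := by exact_mod_cast hR
  have hFxR1 : 1 ≤ F x R := by
    have := F_ge_R hInc hF0 x R
    have h1 : (1:ℝ) ≤ (R:ℝ) := by exact_mod_cast hR
    linarith
  have hFxRpos : 0 < F x R := by linarith
  set Nstar := ⌈K₀ * F x R⌉₊ + 2 with hNstardef
  have hNstar_pos : 0 < Nstar := by omega
  have claimA : ∀ z ∈ B, G.surv B Nstar z ≤ 1/2 := by
    intro z hz
    have hdxz : G.dist x z < R := G.mem_ball_nat.mp hz
    have hdzx : G.dist z x < R := by rw [G.dist_comm' z x]; exact hdxz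
    set R'' : ℕ := M*R with hR''def
    have hR''pos : 0 < R'' := by positivity
    set B'' := G.ball z (R'':ℝ) with hB''def
    have hB'' : B''.Finite := G.ball_finite hp hker z (R'':ℝ)
    have hsub : B ⊆ B'' := by
      intro y hy
      have h1 : G.dist x y < R := G.mem_ball_nat.mp hy
      rw [hB''def, G.mem_ball_nat]
      have h2 := G.dist_triangle' z x y
      have h3 : 2*R ≤ R'' := by
        rw [hR''def]
        nlinarith [hM2, hR]
      omega
    have hsubf : hB.toFinset ⊆ hB''.toFinset := by
      intro v hv
      exact hB''.mem_toFinset.mpr (hsub (hB.mem_toFinset.mp hv))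
    set F'' := F z R'' with hF''def
    have hF''1 : 1 ≤ F'' := by
      have := F_ge_R hInc hF0 z R''
      have h1 : (1:ℝ) ≤ (R'':ℝ) := by exact_mod_cast hR''pos
      linarith
    have hF''pos : 0 < F'' := by linarith
    set n := ⌈(3/2) * F''⌉₊ with hndef
    have h2n_lb : 3*F'' ≤ ((2*n : ℕ):ℝ) := by
      have h1 : (3/2)*F'' ≤ (n:ℝ) := Nat.le_ceil _
      push_cast
      linarith
    have h2n_ub : ((2*n:ℕ):ℝ) ≤ 5*F'' := by
      have h1 : (n:ℝ) < (3/2)*F'' + 1 := Nat.ceil_lt_add_one (by positivity)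
      push_cast
      linarith
    have hsol := G.killedP_subsol hp hker x z R R'' hsub (5 * F z R'')
    have hzmem : z ∈ G.ball z (1*(R'':ℝ)) := by
      rw [one_mul]
      exact G.mem_ball_self' (by exact_mod_cast hR''pos)
    have hpm := hpmv z R'' hR''pos _ hsol (2*n) z hzmem
      (by rw [← hF''def]; exact h2n_lb) (by rw [← hF''def]; exact h2n_ub)
    simp only [one_mul] at hpm
    set V'' := G.vol z (R'':ℝ) with hV''def
    have hxzB'' : z ∈ B'' := G.mem_ball_self' (by exact_mod_cast hR''pos)
    have hV''pos : 0 < V'' := G.setVol_pos hp hker hB'' hxzB''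
    -- bound the space-time sum
    have hwsum_i : ∀ i : ℕ, G.wsum B'' (fun y => G.killedP B i y z)
        = G.vtx z * G.surv B i z := by
      intro i
      rw [G.wsum_eq_sum hB'']
      rw [← Finset.sum_subset hsubf (fun v _ hnv => by
        rw [G.killedP_of_notMem (fun hvB => hnv (hB.mem_toFinset.mpr hvB)) i z, zero_mul])]
      have hterm : ∀ v ∈ hB.toFinset, G.killedP B i v z * G.vtx v
          = G.vtx z * G.killedP B i z v := by
        intro v _
        have := G.killedP_rev hp hker hB i v z
        linarith
      rw [Finset.sum_congr rfl hterm, ← Finset.mul_sum, G.surv_eq_sum hB]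
    have hstsum_le : G.stsum B'' (F z R'') (2*F z R'')
        (fun i y => G.killedP B i y z) ≤ 3*F''*(G.vtx z) := by
      rw [WGraph.stsum]
      set g := fun i:ℕ => if (F z R'') ≤ (i:ℝ) ∧ (i:ℝ) ≤ 2*F z R''
        then G.wsum B'' (fun y => G.killedP B i y z) else 0 with hgdef
      have hgsupp : ∀ i ∉ Finset.range (⌊2*F''⌋₊+1), g i = 0 := by
        intro i hi
        simp only [Finset.mem_range] at hi
        have h1 : ⌊2*F''⌋₊ < i := by omega
        have h2 : 2*F'' < (i:ℝ) := Nat.lt_of_floor_lt h1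
        simp only [hgdef]
        rw [if_neg]
        rintro ⟨-, hle⟩
        rw [← hF''def] at hle
        exact absurd hle (not_le.mpr h2)
      rw [tsum_eq_sum hgsupp]
      have hbound : ∀ i ∈ Finset.range (⌊2*F''⌋₊+1), g i ≤ G.vtx z := by
        intro i _
        simp only [hgdef]
        split
        · rw [hwsum_i i]
          have h1 := G.surv_le_one hp hker hB i z
          have h2 := G.surv_nonneg hp hker (A := B) i z
          nlinarith [G.vtx_pos hp hker z]
        · exact (G.vtx_pos hp hker z).le
      calc ∑ i ∈ Finset.range (⌊2*F''⌋₊+1), g i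
          ≤ ∑ i ∈ Finset.range (⌊2*F''⌋₊+1), G.vtx z := Finset.sum_le_sum hbound
        _ = ((⌊2*F''⌋₊+1 : ℕ):ℝ) * G.vtx z := by
            rw [Finset.sum_const, Finset.card_range, nsmul_eq_mul]
        _ ≤ 3*F''*(G.vtx z) := by
            have h1 : (⌊2*F''⌋₊:ℝ) ≤ 2*F'' := Nat.floor_le (by positivity)
            have h2 := (G.vtx_pos hp hker z).le
            push_cast
            nlinarith
    have hdue : G.killedP B (2*n) z z ≤ 3*C*G.vtx z/V'' := by
      have h1 : C / ((2-1)*F z R''*V'') * G.stsum B'' (F z R'') (2*F z R'')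
          (fun i y => G.killedP B i y z) ≤ C/(F''*V'') * (3*F''*(G.vtx z)) := by
        rw [show ((2:ℝ)-1)*F z R''*V'' = F''*V'' by rw [← hF''def]; ring]
        exact mul_le_mul_of_nonneg_left hstsum_le (by positivity)
      have h2 : C/(F''*V'') * (3*F''*(G.vtx z)) = 3*C*G.vtx z/V'' := by
        field_simp
      calc G.killedP B (2*n) z z ≤ _ := hpm
        _ ≤ C/(F''*V'') * (3*F''*(G.vtx z)) := h1
        _ = 3*C*G.vtx z/V'' := h2
    -- Cauchy-Schwarz and volumes
    have hcs := G.surv_sq_le hp hker hB z n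
    have hVB_le : G.setVol B ≤ G.vol z ((2*R:ℕ):ℝ) := by
      refine G.setVol_mono hB (G.ball_finite hp hker z _) ?_
      intro y hy
      have h1 : G.dist x y < R := G.mem_ball_nat.mp hy
      rw [G.mem_ball_nat]
      have h2 := G.dist_triangle' z x y
      omega
    have hvol2R_pos : 0 < G.vol z ((2*R:ℕ):ℝ) :=
      G.setVol_pos hp hker (G.ball_finite hp hker z _)
        (G.mem_ball_self' (by positivity))
    have hanti := G.vol_anti_iter hp hker hD hVDl z (2*R) (by omega) j
    have hMR : (4^j*(2*R) : ℕ) = M*R := by rw [hMdef]; ring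
    have hV''big : 12*C*G.vol z ((2*R:ℕ):ℝ) ≤ V'' := by
      rw [hV''def, hR''def, ← hMR]
      calc 12*C*G.vol z ((2*R:ℕ):ℝ)
          ≤ (1 + D⁻¹*D⁻¹)^j * G.vol z ((2*R:ℕ):ℝ) :=
            mul_le_mul_of_nonneg_right hj.le hvol2R_pos.le
        _ ≤ G.vol z ((4^j*(2*R) : ℕ):ℝ) := hanti
    have hsurv2n : G.surv B (2*n) z ≤ 1/2 := by
      have hsetnn : 0 ≤ G.setVol B := by
        rw [G.setVol_eq_sum hB]
        exact Finset.sum_nonneg (fun v _ => G.vtx_nonneg v)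
      have hstep : G.killedP B (2*n) z z / G.vtx z ≤ 3*C/V'' := by
        rw [le_div_iff₀ hV''pos] at hdue
        rw [div_le_div_iff₀ (G.vtx_pos hp hker z) hV''pos]
        linarith
      have h1 : G.surv B (2*n) z ^ 2 ≤ 3*C*(G.setVol B)/V'' := by
        calc G.surv B (2*n) z ^ 2
            ≤ (G.killedP B (2*n) z z / G.vtx z) * G.setVol B := hcs
          _ ≤ (3*C/V'') * G.setVol B := mul_le_mul_of_nonneg_right hstep hsetnn
          _ = 3*C*(G.setVol B)/V'' := by ring
      have h2 : 3*C*(G.setVol B)/V'' ≤ 1/4 := by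
        rw [div_le_iff₀ hV''pos]
        have h3 : G.setVol B ≤ G.vol z ((2*R:ℕ):ℝ) := hVB_le
        nlinarith [hvol2R_pos, hV''big, hC1]
      have h4 := G.surv_nonneg hp hker (A := B) (2*n) z
      nlinarith
    -- time comparison: 2n ≤ Nstar
    have hF''le : F'' ≤ CF*(M:ℝ)^β*F x R := by
      have hRlt : R < R'' := by
        rw [hR''def]
        nlinarith [hM2, hR]
      have h1 := hregU z x R'' R hR hRlt (by omega : G.dist z x < R'')
      have hcast : ((R'':ℕ):ℝ)/(R:ℝ) = (M:ℝ) := by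
        rw [hR''def]
        push_cast
        field_simp
      rw [hcast] at h1
      rw [div_le_iff₀ hFxRpos] at h1
      calc F'' = F z R'' := hF''def
        _ ≤ CF * (M:ℝ)^β * F x R := by linarith
    have h2n_le : 2*n ≤ Nstar := by
      have h1 : ((2*n:ℕ):ℝ) ≤ K₀ * F x R := by
        have : 5*F'' ≤ 5*(CF*(M:ℝ)^β*F x R) := by linarith
        rw [hK₀def]
        calc ((2*n:ℕ):ℝ) ≤ 5*F'' := h2n_ub
          _ ≤ 5*CF*(M:ℝ)^β*F x R := by linarith
      have h2 : K₀ * F x R ≤ (⌈K₀ * F x R⌉₊:ℝ) := Nat.le_ceil _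
      have h3 : ((2*n:ℕ):ℝ) ≤ (⌈K₀ * F x R⌉₊:ℝ) := by linarith
      have h4 : 2*n ≤ ⌈K₀ * F x R⌉₊ := by exact_mod_cast h3
      omega
    calc G.surv B Nstar z ≤ G.surv B (2*n) z := G.surv_mono hp hker hB h2n_le z
      _ ≤ 1/2 := hsurv2n
  -- conclude
  have hxB : x ∈ B := G.mem_ball_self' hRR
  have hEeq := G.exitE_eq_tsum_surv hp hker hB Nstar hNstar_pos
    (θ := 1/2) (by norm_num) (by norm_num) claimA x
  have hEle := G.tsum_surv_le hp hker hB Nstar hNstar_pos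
    (θ := 1/2) (by norm_num) (by norm_num) claimA x
  have hNle : (Nstar:ℝ) ≤ K₀ * F x R + 3 := by
    rw [hNstardef]
    push_cast
    have := Nat.ceil_lt_add_one (show (0:ℝ) ≤ K₀ * F x R by positivity)
    linarith
  calc G.exitE B x = ∑' m, G.surv B m x := hEeq
    _ ≤ (Nstar:ℝ)/(1 - 1/2) := hEle
    _ = 2*(Nstar:ℝ) := by
        rw [div_eq_iff (by norm_num : (1:ℝ) - 1/2 ≠ 0)]
        ring
    _ ≤ 2*(K₀ * F x R + 3) := by linarith
    _ ≤ (2*K₀+6) * F x R := by nlinarith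

end Aux11

end WGraph


/-- under (p0) and (VD), if PMV(F) and PSMV(F) hold for some
F ∈ W₀, then E(x,R) ≃ F(x,R) and (TC) holds. -/
theorem statement11 {Γ : Type*} (G : WGraph Γ) (hp0 : G.p0cond) (hVD : G.VD)
    (F : Γ → ℕ → ℝ) (hF : G.memW0 F) (hPMV : G.PMV F) (hPSMV : G.PSMV F) :
    (∃ C > (1:ℝ), ∀ (x : Γ) (R : ℕ), 0 < R →
      G.meanE x (R:ℝ) ≤ C * F x R ∧ F x R ≤ C * G.meanE x (R:ℝ)) ∧
    G.TC := by
  obtain ⟨p, hp, hker⟩ := hp0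
  obtain ⟨D₀, hD₀, hVDl⟩ := hVD
  obtain ⟨⟨β, hβ, β', hβ', hw0⟩, ⟨c0, hc0, hc0F⟩, hInc⟩ := hF
  obtain ⟨cF, hcF, CF, hCF, hreg⟩ := hw0
  have hF0 : ∀ x : Γ, 0 ≤ F x 0 := by
    intro x
    have := hc0F x 0
    simpa using this
  have hregU : ∀ (x y : Γ) (R r : ℕ), 0 < r → r < R → G.dist x y < R →
      F x R / F y r ≤ CF * ((R:ℝ)/(r:ℝ)) ^ β :=
    fun x y R r h1 h2 h3 => (hreg x y R r h1 h2 h3).2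
  obtain ⟨C1, hC1pos, hE_le⟩ := G.goal1 hp hker hD₀ hVDl hInc hF0 hCF hregU hPMV
  obtain ⟨C2, hC2pos, hF_le⟩ := G.goal2 hp hker hInc hF0 hPSMV
  have hFpos : ∀ (x : Γ) (R : ℕ), 0 < R → 0 < F x R := by
    intro x R hR
    have h1 := WGraph.F_ge_R hInc hF0 x R
    have h2 : (1:ℝ) ≤ (R:ℝ) := by exact_mod_cast hR
    linarith
  have hEnn : ∀ (x : Γ) (R : ℕ), 0 ≤ G.exitE (G.ball x (R:ℝ)) x :=
    fun x R => G.exitE_nonneg' _ x hp hker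
  constructor
  · refine ⟨C1 + C2 + 2, by linarith, ?_⟩
    intro x R hR
    have h1 : G.exitE (G.ball x (R:ℝ)) x ≤ C1 * F x R := hE_le x R hR
    have h2 : F x R ≤ C2 * G.exitE (G.ball x (R:ℝ)) x := hF_le x R hR
    have h3 := hFpos x R hR
    have h4 := hEnn x R
    constructor
    · show G.exitE (G.ball x (R:ℝ)) x ≤ (C1 + C2 + 2) * F x R
      nlinarith
    · show F x R ≤ (C1 + C2 + 2) * G.exitE (G.ball x (R:ℝ)) x
      nlinarith
  · -- (TC)
    have h2β : (0:ℝ) < (2:ℝ)^β := Real.rpow_pos_of_pos (by norm_num) β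
    refine ⟨C1*(CF*(2:ℝ)^β)*C2 + 2, by nlinarith [mul_pos (mul_pos hC1pos (mul_pos hCF h2β)) hC2pos], ?_⟩
    intro x y R hR hdist
    have hcast : (2*(R:ℝ)) = ((2*R:ℕ):ℝ) := by push_cast; ring
    have h1 : G.meanE x (2*(R:ℝ)) ≤ C1 * F x (2*R) := by
      rw [hcast]
      exact hE_le x (2*R) (by omega)
    have h2 := hregU x y (2*R) R hR (by omega) (by omega : G.dist x y < 2*R)
    have hc2 : ((2*R:ℕ):ℝ)/(R:ℝ) = 2 := by
      have hR0 : (R:ℝ) ≠ 0 := by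
        have : (0:ℝ) < (R:ℝ) := by exact_mod_cast hR
        linarith
      push_cast
      field_simp
    rw [hc2] at h2
    have hFy := hFpos y R hR
    rw [div_le_iff₀ hFy] at h2
    have h3 : F y R ≤ C2 * G.meanE y (R:ℝ) := hF_le y R hR
    have h4 : 0 ≤ G.meanE y (R:ℝ) := hEnn y R
    have h5 : G.meanE x (2*(R:ℝ)) ≤ C1 * (CF * (2:ℝ)^β * F y R) := by
      have := mul_le_mul_of_nonneg_left h2 hC1pos.le
      linarith
    have h6 : C1 * (CF * (2:ℝ)^β * F y R) ≤ C1 * (CF * (2:ℝ)^β * (C2 * G.meanE y (R:ℝ))) := by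
      have hpos : 0 ≤ C1 * (CF * (2:ℝ)^β) := by positivity
      nlinarith
    calc G.meanE x (2*(R:ℝ)) ≤ C1 * (CF * (2:ℝ)^β * (C2 * G.meanE y (R:ℝ))) := by linarith
      _ = (C1*(CF*(2:ℝ)^β)*C2) * G.meanE y (R:ℝ) := by ring
      _ ≤ (C1*(CF*(2:ℝ)^β)*C2 + 2) * G.meanE y (R:ℝ) := by nlinarith
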